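/- arXiv:1311.5458 — 5 statements merged into one kernel-verified Lean document; each statement's English description precedes it below -/
import Mathlib

section
/- Let q ≥ 2 and let W : Λ → ℝ be a nonnegative function on the full shift space Λ = (ℕ → Fin q) satisfying the Keane condition: Σ_{a∈𝔄} W(a·x) = 1 for all x ∈ Λ. Then for every basepoint x₀ ∈ Λ there exists a Borel probability measure μ_{W,x₀} on Λ such that for every finite word w = (w_1,…,w_m), μ_{W,x₀}(Λ(w)) = Π_{j=1}^m W(w_j · w_{j−1} ⋯ w_1 · x₀), where w_j · w_{j−1} ⋯ w_1 · x₀ denotes the sequence obtained from x₀ by prepending the letters w_1, then w_2, …, then w_j. -/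
/-- Prepend a letter `a` to a sequence `x`. -/
def prepend {q : ℕ} (a : Fin q) (x : ℕ → Fin q) : ℕ → Fin q
  | 0 => a
  | n + 1 => x n

/-- `prependStage w x₀ j` is the sequence `w_j · w_{j-1} ⋯ w_1 · x₀` obtained
from the basepoint `x₀` by successively prepending the letters `w 0`, `w 1`, …,
`w (j-1)` of the word `w`. -/
def prependStage {q : ℕ} (w : ℕ → Fin q) (x₀ : ℕ → Fin q) : ℕ → ℕ → Fin q
  | 0 => x₀
  | j + 1 => prepend (w j) (prependStage w x₀ j)

namespace Stmt1Aux

variable {q : ℕ} (W : (ℕ → Fin q) → ℝ)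

/-- cumulative distribution of first `k` letters -/
noncomputable def Fc (y : ℕ → Fin q) (k : ℕ) : ℝ :=
  ∑ a : Fin q, if (a : ℕ) < k then W (prepend a y) else 0

lemma Fc_zero (y : ℕ → Fin q) : Fc W y 0 = 0 := by simp [Fc]

lemma Fc_nonneg (hW0 : ∀ x, 0 ≤ W x) (y : ℕ → Fin q) (k : ℕ) : 0 ≤ Fc W y k := by
  apply Finset.sum_nonneg
  intro a _
  split_ifs
  · exact hW0 _
  · exact le_refl 0

lemma Fc_mono (hW0 : ∀ x, 0 ≤ W x) (y : ℕ → Fin q) {j k : ℕ} (h : j ≤ k) :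
    Fc W y j ≤ Fc W y k := by
  apply Finset.sum_le_sum
  intro a _
  split_ifs with h1 h2 h2
  · exact le_refl _
  · omega
  · exact hW0 _
  · exact le_refl _

lemma Fc_q (hKeane : ∀ x : ℕ → Fin q, ∑ a : Fin q, W (prepend a x) = 1) (y : ℕ → Fin q) :
    Fc W y q = 1 := by
  rw [Fc, ← hKeane y]
  exact Finset.sum_congr rfl fun a _ => if_pos a.isLt

lemma Fc_succ (y : ℕ → Fin q) {k : ℕ} (hk : k < q) :
    Fc W y (k + 1) = Fc W y k + W (prepend ⟨k, hk⟩ y) := by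
  have key : ∀ a : Fin q, (if (a : ℕ) < k + 1 then W (prepend a y) else 0)
      = (if (a : ℕ) < k then W (prepend a y) else 0)
        + (if a = ⟨k, hk⟩ then W (prepend a y) else 0) := by
    intro a
    rcases lt_trichotomy (a : ℕ) k with h | h | h
    · rw [if_pos (by omega), if_pos h, if_neg (by simp [Fin.ext_iff]; omega)]; ring
    · rw [if_pos (by omega), if_neg (by omega), if_pos (by simp [Fin.ext_iff, h])]; ring
    · rw [if_neg (by omega), if_neg (by omega), if_neg (by simp [Fin.ext_iff]; omega)]; ring
  simp only [Fc, key, Finset.sum_add_distrib]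
  rw [Finset.sum_ite_eq' Finset.univ (⟨k, hk⟩ : Fin q) (fun a => W (prepend a y))]
  simp

open Classical in
/-- the digit selected by `t` -/
noncomputable def digit [NeZero q] (y : ℕ → Fin q) (t : ℝ) : Fin q :=
  ⟨Nat.findGreatest (fun k => Fc W y k ≤ t) (q - 1),
    lt_of_le_of_lt (Nat.findGreatest_le _) (Nat.sub_lt (NeZero.pos q) one_pos)⟩

open Classical in
lemma digit_spec [NeZero q] (hW0 : ∀ x, 0 ≤ W x)
    (hKeane : ∀ x : ℕ → Fin q, ∑ a : Fin q, W (prepend a x) = 1)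
    (y : ℕ → Fin q) {t : ℝ} (ht0 : 0 ≤ t) (ht1 : t < 1) :
    Fc W y (digit W y t : ℕ) ≤ t ∧ t < Fc W y ((digit W y t : ℕ) + 1) := by
  have h0 : Fc W y 0 ≤ t := by rw [Fc_zero]; exact ht0
  have hspec : Fc W y (Nat.findGreatest (fun k => Fc W y k ≤ t) (q - 1)) ≤ t :=
    Nat.findGreatest_spec (P := fun k => Fc W y k ≤ t) (Nat.zero_le _) h0
  refine ⟨hspec, ?_⟩
  set d := Nat.findGreatest (fun k => Fc W y k ≤ t) (q - 1) with hd
  have hdv : (digit W y t : ℕ) = d := rfl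
  rw [hdv]
  have hdle : d ≤ q - 1 := Nat.findGreatest_le _
  rcases eq_or_lt_of_le hdle with h | h
  · have : d + 1 = q := by have := NeZero.pos q; omega
    rw [this, Fc_q W hKeane]
    exact ht1
  · have := Nat.findGreatest_is_greatest (show d < d + 1 by omega) (by omega)
    exact not_le.mp this

lemma digit_eq [NeZero q] (hW0 : ∀ x, 0 ≤ W x)
    (hKeane : ∀ x : ℕ → Fin q, ∑ a : Fin q, W (prepend a x) = 1)
    (y : ℕ → Fin q) {t : ℝ} {k : ℕ} (hkq : k < q)
    (h1 : Fc W y k ≤ t) (h2 : t < Fc W y (k + 1)) :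
    (digit W y t : ℕ) = k := by
  have ht0 : 0 ≤ t := le_trans (Fc_nonneg W hW0 y k) h1
  have ht1 : t < 1 := lt_of_lt_of_le h2 (by
    rw [← Fc_q W hKeane y]; exact Fc_mono W hW0 y (by omega))
  obtain ⟨hs1, hs2⟩ := digit_spec W hW0 hKeane y ht0 ht1
  set d := (digit W y t : ℕ)
  rcases lt_trichotomy d k with h | h | h
  · exfalso
    have : Fc W y (d + 1) ≤ Fc W y k := Fc_mono W hW0 y (by omega)
    linarith
  · exact h
  · exfalso
    have : Fc W y (k + 1) ≤ Fc W y d := Fc_mono W hW0 y (by omega)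
    linarith

/-- the rescaled remainder -/
noncomputable def step [NeZero q] (y : ℕ → Fin q) (t : ℝ) : ℝ :=
  (t - Fc W y (digit W y t : ℕ)) / W (prepend (digit W y t) y)

/-- the digit sequence of `t` -/
noncomputable def seq [NeZero q] : ℕ → (ℕ → Fin q) → ℝ → Fin q
  | 0, y, t => digit W y t
  | n + 1, y, t => seq n (prepend (digit W y t) y) (step W y t)

lemma prependStage_shift {q : ℕ} (w y : ℕ → Fin q) :
    ∀ j, prependStage w y (j + 1)
      = prependStage (fun i => w (i + 1)) (prepend (w 0) y) j
  | 0 => rfl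
  | j + 1 => by
      show prepend (w (j + 1)) (prependStage w y (j + 1)) = _
      rw [prependStage_shift w y j]
      rfl

lemma main [NeZero q] (hW0 : ∀ x, 0 ≤ W x)
    (hKeane : ∀ x : ℕ → Fin q, ∑ a : Fin q, W (prepend a x) = 1) :
    ∀ (m : ℕ) (y w : ℕ → Fin q), ∃ c : ℝ,
      0 ≤ c ∧ c + (∏ j ∈ Finset.range m, W (prependStage w y (j + 1))) ≤ 1 ∧
      {t : ℝ | t ∈ Set.Ico (0:ℝ) 1 ∧ ∀ i < m, seq W i y t = w i}
        = Set.Ico c (c + ∏ j ∈ Finset.range m, W (prependStage w y (j + 1))) := by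
  intro m
  induction m with
  | zero =>
    intro y w
    refine ⟨0, le_refl 0, by simp, ?_⟩
    ext t
    simp
  | succ m ih =>
    intro y w
    obtain ⟨c', h0', h1', hset'⟩ := ih (prepend (w 0) y) (fun i => w (i + 1))
    set y' := prepend (w 0) y with hy'
    set w' := fun i => w (i + 1) with hw'
    set P := W (prepend (w 0) y) with hP
    set F := Fc W y ((w 0 : ℕ)) with hF
    set L' := ∏ j ∈ Finset.range m, W (prependStage w' y' (j + 1)) with hL'
    have hFP : F + P = Fc W y ((w 0 : ℕ) + 1) := by
      rw [Fc_succ W y (w 0).isLt]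
    have hL : (∏ j ∈ Finset.range (m + 1), W (prependStage w y (j + 1))) = P * L' := by
      rw [Finset.prod_range_succ']
      have h1 : ∀ j, W (prependStage w y (j + 1 + 1)) = W (prependStage w' y' (j + 1)) := by
        intro j
        rw [show (j + 1 + 1) = (j + 1) + 1 from rfl, prependStage_shift w y (j + 1)]
      have h2 : W (prependStage w y (0 + 1)) = P := rfl
      rw [h2, Finset.prod_congr rfl fun j _ => h1 j, mul_comm]
    have hF0 : 0 ≤ F := Fc_nonneg W hW0 y _
    have hP0 : 0 ≤ P := hW0 _
    have hL'0 : 0 ≤ L' := Finset.prod_nonneg fun j _ => hW0 _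
    have hFP1 : F + P ≤ 1 := by
      rw [hFP, ← Fc_q W hKeane y]
      exact Fc_mono W hW0 y (w 0).isLt
    have hc'0 : 0 ≤ c' := h0'
    refine ⟨F + P * c', by positivity, ?_, ?_⟩
    · rw [hL]
      nlinarith [mul_le_mul_of_nonneg_left h1' hP0]
    · rw [hL]
      ext t
      simp only [Set.mem_setOf_eq, Set.mem_Ico]
      constructor
      · rintro ⟨⟨ht0, ht1⟩, hall⟩
        have hd : digit W y t = w 0 := hall 0 (by omega)
        obtain ⟨hs1, hs2⟩ := digit_spec W hW0 hKeane y ht0 ht1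
        rw [hd] at hs1 hs2
        rw [← hFP] at hs2
        have hPpos : 0 < P := by linarith
        have hstep : step W y t = (t - F) / P := by
          simp only [step, hd, hF, hP]
        have htail : ∀ i < m, seq W i y' ((t - F) / P) = w' i := by
          intro i hi
          have h := hall (i + 1) (by omega)
          have : seq W (i + 1) y t = seq W i (prepend (digit W y t) y) (step W y t) := rfl
          rw [this, hd, hstep] at h
          exact h
        have hsmem : ((t - F) / P) ∈ {s : ℝ | s ∈ Set.Ico (0:ℝ) 1 ∧
            ∀ i < m, seq W i y' s = w' i} := by
          refine ⟨⟨div_nonneg (by linarith) hPpos.le, (div_lt_one hPpos).mpr (by linarith)⟩, htail⟩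
        rw [hset'] at hsmem
        obtain ⟨hm1, hm2⟩ := hsmem
        constructor
        · have := (le_div_iff₀ hPpos).mp hm1
          linarith
        · have := (div_lt_iff₀ hPpos).mp hm2
          nlinarith
      · rintro ⟨h1t, h2t⟩
        have hprod : 0 < P * L' := by linarith
        have hPpos : 0 < P := by
          rcases lt_or_eq_of_le hP0 with h | h
          · exact h
          · exfalso; rw [← h, zero_mul] at hprod; linarith
        have hL'pos : 0 < L' := by
          rcases lt_or_eq_of_le hL'0 with h | h
          · exact h
          · exfalso; rw [← h, mul_zero] at hprod; linarith
        have hPc'0 : 0 ≤ P * c' := by positivity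
        have hFt : F ≤ t := by linarith
        have htFP : t < F + P := by nlinarith [mul_le_mul_of_nonneg_left h1' hPpos.le]
        have ht0 : 0 ≤ t := by linarith
        have ht1 : t < 1 := by linarith
        have hd : digit W y t = w 0 := by
          have := digit_eq W hW0 hKeane y (t := t) (w 0).isLt (hF ▸ hFt) (hFP ▸ htFP)
          exact Fin.ext this
        have hstep : step W y t = (t - F) / P := by
          simp only [step, hd, hF, hP]
        have hsmem : ((t - F) / P) ∈ Set.Ico c' (c' + L') := by
          constructor
          · rw [le_div_iff₀ hPpos]; linarith
          · rw [div_lt_iff₀ hPpos]; nlinarith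
        rw [← hset'] at hsmem
        obtain ⟨-, htail⟩ := hsmem
        refine ⟨⟨ht0, ht1⟩, ?_⟩
        intro i hi
        match i with
        | 0 => exact hd
        | i + 1 =>
          show seq W i (prepend (digit W y t) y) (step W y t) = w (i + 1)
          rw [hd, hstep]
          exact htail i (by omega)

lemma meas_seq [NeZero q] (hW0 : ∀ x, 0 ≤ W x)
    (hKeane : ∀ x : ℕ → Fin q, ∑ a : Fin q, W (prepend a x) = 1)
    (y : ℕ → Fin q) (n : ℕ) (b : Fin q) :
    MeasurableSet {t : ℝ | t ∈ Set.Ico (0:ℝ) 1 ∧ seq W n y t = b} := by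
  classical
  have hrw : {t : ℝ | t ∈ Set.Ico (0:ℝ) 1 ∧ seq W n y t = b}
      = ⋃ v : Fin n → Fin q, {t : ℝ | t ∈ Set.Ico (0:ℝ) 1 ∧
          ∀ i < n + 1, seq W i y t = (fun i => if h : i < n then v ⟨i, h⟩ else b) i} := by
    ext t
    simp only [Set.mem_iUnion, Set.mem_setOf_eq]
    constructor
    · rintro ⟨htI, hb⟩
      refine ⟨fun i => seq W i.val y t, htI, fun i hi => ?_⟩
      by_cases h : i < n
      · rw [dif_pos h]
      · have : i = n := by omega
        rw [dif_neg h, this]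
        exact hb
    · rintro ⟨v, htI, hall⟩
      refine ⟨htI, ?_⟩
      have := hall n (by omega)
      rwa [dif_neg (lt_irrefl n)] at this
  rw [hrw]
  refine MeasurableSet.iUnion fun v => ?_
  obtain ⟨c, -, -, hset⟩ := main W hW0 hKeane (n + 1) y _
  rw [hset]
  exact measurableSet_Ico

end Stmt1Aux

/-- For a nonnegative potential `W` on the full shift `Λ = (ℕ → Fin q)`
satisfying the Keane condition, and any basepoint `x₀`, there is a Borel
probability measure on `Λ` assigning to the cylinder of a finite word
`w = (w_1, …, w_m)` the mass `∏_{j=1}^m W(w_j · w_{j-1} ⋯ w_1 · x₀)`. -/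
theorem stmt1 (q : ℕ) (hq : 2 ≤ q) (W : (ℕ → Fin q) → ℝ)
    (hW0 : ∀ x, 0 ≤ W x)
    (hKeane : ∀ x : ℕ → Fin q, ∑ a : Fin q, W (prepend a x) = 1)
    (x₀ : ℕ → Fin q) :
    ∃ μ : MeasureTheory.Measure (ℕ → Fin q),
      MeasureTheory.IsProbabilityMeasure μ ∧
      ∀ (m : ℕ) (w : ℕ → Fin q),
        μ {x | ∀ i < m, x i = w i} =
          ENNReal.ofReal (∏ j ∈ Finset.range m, W (prependStage w x₀ (j + 1))) := by
  classical
  haveI : NeZero q := ⟨by omega⟩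
  open Stmt1Aux MeasureTheory in
  set z : Fin q := ⟨0, by omega⟩ with hz
  set ν := MeasureTheory.volume.restrict (Set.Ico (0:ℝ) 1) with hν
  set g : ℝ → (ℕ → Fin q) :=
    fun t n => if t ∈ Set.Ico (0:ℝ) 1 then Stmt1Aux.seq W n x₀ t else z with hg'
  have hg : Measurable g := by
    apply measurable_pi_lambda
    intro n
    apply measurable_to_countable'
    intro b
    have hrw : (fun t => g t n) ⁻¹' {b}
        = {t : ℝ | t ∈ Set.Ico (0:ℝ) 1 ∧ Stmt1Aux.seq W n x₀ t = b}
          ∪ ((Set.Ico (0:ℝ) 1)ᶜ ∩ {t : ℝ | z = b}) := by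
      ext t
      simp only [Set.mem_preimage, Set.mem_singleton_iff, Set.mem_union, Set.mem_setOf_eq,
        Set.mem_inter_iff, Set.mem_compl_iff, hg']
      by_cases ht : t ∈ Set.Ico (0:ℝ) 1
      · simp [ht]
      · simp [ht]
    rw [hrw]
    exact (Stmt1Aux.meas_seq W hW0 hKeane x₀ n b).union
      ((measurableSet_Ico.compl).inter (MeasurableSet.const _))
  refine ⟨ν.map g, ⟨?_⟩, ?_⟩
  · rw [MeasureTheory.Measure.map_apply hg MeasurableSet.univ, Set.preimage_univ, hν,
      MeasureTheory.Measure.restrict_apply MeasurableSet.univ, Set.univ_inter,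
      Real.volume_Ico]
    norm_num
  · intro m w
    have hS : MeasurableSet {x : ℕ → Fin q | ∀ i < m, x i = w i} := by
      have : {x : ℕ → Fin q | ∀ i < m, x i = w i}
          = ⋂ i, ⋂ (_ : i < m), (fun x : ℕ → Fin q => x i) ⁻¹' {w i} := by
        ext x; simp
      rw [this]
      exact MeasurableSet.iInter fun i => MeasurableSet.iInter fun _ =>
        (measurable_pi_apply i) (measurableSet_singleton (w i))
    rw [MeasureTheory.Measure.map_apply hg hS, hν,
      MeasureTheory.Measure.restrict_apply (hg hS)]
    obtain ⟨c, hc0, hc1, hset⟩ := Stmt1Aux.main W hW0 hKeane m x₀ w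
    have hrw : g ⁻¹' {x : ℕ → Fin q | ∀ i < m, x i = w i} ∩ Set.Ico (0:ℝ) 1
        = {t : ℝ | t ∈ Set.Ico (0:ℝ) 1 ∧ ∀ i < m, Stmt1Aux.seq W i x₀ t = w i} := by
      ext t
      simp only [Set.mem_inter_iff, Set.mem_preimage, Set.mem_setOf_eq, hg']
      constructor
      · rintro ⟨hall, ht⟩
        refine ⟨ht, fun i hi => ?_⟩
        have := hall i hi
        rwa [if_pos ht] at this
      · rintro ⟨ht, hall⟩
        refine ⟨fun i hi => ?_, ht⟩
        rw [if_pos ht]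
        exact hall i hi
    rw [hrw, hset, Real.volume_Ico, add_sub_cancel_left]
end

section
/- Let A be a q×q matrix with entries in {0,1}, let P_{a,b} > 0 be positive transition weights, and set T_{a,b} = A_{a,b} P_{a,b}. Suppose v is a positive vector with T v = v (i.e. Σ_b A_{a,b} P_{a,b} v_b = v_a for all a) normalized by Σ_a v_a = 1. Then there exists a Borel probability measure ν on the subshift space Λ_A such that for every admissible finite word w = (w_1,…,w_k) with k ≥ 1, ν(Λ_A(w)) = (Π_{j=1}^{k−1} P_{w_j, w_{j+1}}) · v_{w_k}. (With P_{a,b} = e^{−βλ_{a,b}}, this is the Markov-type multifractal measure arising from the KMS_β state of the Cuntz–Krieger algebra 𝒪_{𝔄,A} for the time evolution σ_t(S_a) = W^{it} S_a.) -/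
open MeasureTheory Set

namespace Stmt8Aux

variable {q : ℕ}

/-- cumulative sums of `p` up to (exclusive) natural index `n`. -/
noncomputable def cum (p : Fin q → ℝ) (n : ℕ) : ℝ :=
  ∑ c : Fin q, if (c : ℕ) < n then p c else 0

lemma cum_zero (p : Fin q → ℝ) : cum p 0 = 0 := by simp [cum]

lemma cum_succ (p : Fin q → ℝ) {i : ℕ} (hi : i < q) :
    cum p (i + 1) = cum p i + p ⟨i, hi⟩ := by
  unfold cum
  have : ∀ c : Fin q, (if (c : ℕ) < i + 1 then p c else 0)
      = (if (c : ℕ) < i then p c else 0) + (if c = ⟨i, hi⟩ then p c else 0) := by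
    intro c
    rcases lt_trichotomy (c : ℕ) i with h | h | h
    · rw [if_pos (by omega), if_pos h, if_neg (by simp [Fin.ext_iff]; omega)]; ring
    · rw [if_pos (by omega), if_neg (by omega), if_pos (by simp [Fin.ext_iff, h])]; ring
    · rw [if_neg (by omega), if_neg (by omega), if_neg (by simp [Fin.ext_iff]; omega)]; ring
  rw [Finset.sum_congr rfl (fun c _ => this c), Finset.sum_add_distrib]
  congr 1
  simp

lemma cum_nonneg {p : Fin q → ℝ} (hp : ∀ b, 0 ≤ p b) (n : ℕ) : 0 ≤ cum p n :=
  Finset.sum_nonneg fun c _ => by split <;> [skip; skip] <;> [exact hp c; exact le_rfl]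

lemma cum_mono {p : Fin q → ℝ} (hp : ∀ b, 0 ≤ p b) : Monotone (cum p) := by
  intro m n hmn
  refine Finset.sum_le_sum fun c _ => ?_
  by_cases h : (c : ℕ) < m
  · rw [if_pos h, if_pos (by omega)]
  · rw [if_neg h]; split <;> [skip; skip] <;> [exact hp c; exact le_rfl]

lemma cum_le_total {p : Fin q → ℝ} (hp : ∀ b, 0 ≤ p b) (n : ℕ) : cum p n ≤ ∑ c, p c :=
  Finset.sum_le_sum fun c _ => by split <;> [skip; skip] <;> [exact le_rfl; exact hp c]

lemma cum_total (p : Fin q → ℝ) : cum p q = ∑ c, p c := by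
  unfold cum
  exact Finset.sum_congr rfl fun c _ => if_pos c.isLt

/-- pick the subinterval of `[l, l + ∑ p)` containing `t`. -/
noncomputable def pick (d : Fin q) (p : Fin q → ℝ) (l t : ℝ) : Fin q :=
  if h : ∃ b : Fin q, t ∈ Ico (l + cum p b) (l + cum p ((b : ℕ) + 1)) then h.choose else d

lemma pick_unique {p : Fin q → ℝ} (hp : ∀ b, 0 ≤ p b) {l t : ℝ} {b b' : Fin q}
    (hb : t ∈ Ico (l + cum p b) (l + cum p ((b : ℕ) + 1)))
    (hb' : t ∈ Ico (l + cum p b') (l + cum p ((b' : ℕ) + 1))) : b = b' := by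
  have key : ∀ c c' : Fin q, (c : ℕ) < (c' : ℕ) →
      t ∈ Ico (l + cum p c) (l + cum p ((c : ℕ) + 1)) →
      t ∈ Ico (l + cum p c') (l + cum p ((c' : ℕ) + 1)) → False := by
    intro c c' hcc hc hc'
    have h1 : cum p ((c : ℕ) + 1) ≤ cum p c' := cum_mono hp (by omega)
    have := hc.2
    have := hc'.1
    linarith
  rcases lt_trichotomy (b : ℕ) (b' : ℕ) with h | h | h
  · exact absurd (key b b' h hb hb') (by simp)
  · exact Fin.ext h
  · exact absurd (key b' b h hb' hb) (by simp)

lemma pick_exists (d : Fin q) {p : Fin q → ℝ} (hp : ∀ b, 0 ≤ p b) {l t : ℝ}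
    (ht : t ∈ Ico l (l + ∑ c, p c)) :
    ∃ b : Fin q, t ∈ Ico (l + cum p b) (l + cum p ((b : ℕ) + 1)) := by
  classical
  have hq0 : 0 < q := d.pos
  set PP : ℕ → Prop := fun i => l + cum p i ≤ t with hPP
  have hP0 : PP 0 := by simp [hPP, cum_zero]; exact ht.1
  set j := Nat.findGreatest PP (q - 1) with hj
  have hjs : PP j := Nat.findGreatest_spec (Nat.zero_le _) hP0
  have hjle : j ≤ q - 1 := Nat.findGreatest_le _
  refine ⟨⟨j, by omega⟩, hjs, ?_⟩
  by_cases hje : j = q - 1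
  · have : (j : ℕ) + 1 = q := by omega
    rw [this, cum_total]
    exact ht.2
  · have hnp : ¬ PP (j + 1) := by
      apply Nat.findGreatest_is_greatest (P := PP) (n := q - 1) <;> omega
    simp only [hPP, not_le] at hnp
    exact hnp

lemma pick_mem (d : Fin q) {p : Fin q → ℝ} (hp : ∀ b, 0 ≤ p b) {l t : ℝ}
    (ht : t ∈ Ico l (l + ∑ c, p c)) :
    t ∈ Ico (l + cum p (pick d p l t)) (l + cum p ((pick d p l t : ℕ) + 1)) := by
  have h := pick_exists d hp ht
  rw [pick, dif_pos h]
  exact h.choose_spec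

lemma pick_eq_iff (d : Fin q) {p : Fin q → ℝ} (hp : ∀ b, 0 ≤ p b) {l t : ℝ}
    (ht : t ∈ Ico l (l + ∑ c, p c)) {b : Fin q} :
    pick d p l t = b ↔ t ∈ Ico (l + cum p b) (l + cum p ((b : ℕ) + 1)) := by
  constructor
  · rintro rfl; exact pick_mem d hp ht
  · intro hb; exact pick_unique hp (pick_mem d hp ht) hb

lemma measurable_pick (d : Fin q) {p : Fin q → ℝ} (hp : ∀ b, 0 ≤ p b) (l : ℝ) :
    Measurable (pick d p l) := by
  apply measurable_to_countable'
  intro b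
  have hset : pick d p l ⁻¹' {b} =
      Ico (l + cum p b) (l + cum p ((b : ℕ) + 1)) ∪
      (if b = d then {t : ℝ | ¬ ∃ b' : Fin q,
        t ∈ Ico (l + cum p b') (l + cum p ((b' : ℕ) + 1))} else ∅) := by
    ext t
    simp only [mem_preimage, mem_singleton_iff, mem_union]
    by_cases h : ∃ b' : Fin q, t ∈ Ico (l + cum p b') (l + cum p ((b' : ℕ) + 1))
    · rw [pick, dif_pos h]
      constructor
      · rintro rfl
        exact Or.inl h.choose_spec
      · rintro (hb | hb)
        · exact pick_unique hp h.choose_spec hb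
        · exfalso
          rcases eq_or_ne b d with rfl | hne
          · rw [if_pos rfl] at hb; exact hb h
          · rw [if_neg hne] at hb; exact hb
    · rw [pick, dif_neg h]
      constructor
      · rintro rfl
        rw [if_pos rfl]
        exact Or.inr h
      · rintro (hb | hb)
        · exact absurd ⟨b, hb⟩ h
        · rcases eq_or_ne b d with rfl | hne
          · rfl
          · rw [if_neg hne] at hb; exact hb.elim
  rw [hset]
  apply MeasurableSet.union measurableSet_Ico
  split
  · have : {t : ℝ | ¬ ∃ b' : Fin q, t ∈ Ico (l + cum p b') (l + cum p ((b' : ℕ) + 1))}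
        = (⋃ b' : Fin q, Ico (l + cum p b') (l + cum p ((b' : ℕ) + 1)))ᶜ := by
      ext t; simp
    rw [this]
    exact (MeasurableSet.iUnion fun b' => measurableSet_Ico).compl
  · exact MeasurableSet.empty

section Chain

variable (v : Fin q → ℝ) (QQ : Fin q → Fin q → ℝ) (d : Fin q)

/-- distribution of the digit at step `k`, given the previous digit. -/
def step (w : ℕ → Fin q) : ℕ → Fin q → ℝ
  | 0 => v
  | (k + 1) => QQ (w k)

/-- length of the interval coding the first `k` digits of `w`. -/
noncomputable def len (w : ℕ → Fin q) : ℕ → ℝ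
  | 0 => 1
  | (k + 1) => len w k * step v QQ w k (w k)

/-- left endpoint of the interval coding the first `k` digits of `w`. -/
noncomputable def left (w : ℕ → Fin q) : ℕ → ℝ
  | 0 => 0
  | (k + 1) => left w k + cum (fun b => len v QQ w k * step v QQ w k b) ((w k : ℕ))

/-- next digit of `t`, given prefix digits `w` up to `k`. -/
noncomputable def nd (w : ℕ → Fin q) (k : ℕ) (t : ℝ) : Fin q :=
  pick d (fun b => len v QQ w k * step v QQ w k b) (left v QQ w k) t

/-- the prefix words of `t`. -/
noncomputable def pre (t : ℝ) : ℕ → (ℕ → Fin q)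
  | 0 => fun _ => d
  | (k + 1) => Function.update (pre t k) k (nd v QQ d (pre t k) k t)

/-- the digit sequence of `t`. -/
noncomputable def X (t : ℝ) (k : ℕ) : Fin q := pre v QQ d t (k + 1) k

variable {v QQ}

lemma prefix_dep {w w' : ℕ → Fin q} {k : ℕ} (hw : ∀ i < k, w i = w' i) :
    step v QQ w k = step v QQ w' k ∧ len v QQ w k = len v QQ w' k ∧
      left v QQ w k = left v QQ w' k := by
  induction k with
  | zero => exact ⟨rfl, rfl, rfl⟩
  | succ k ih =>
    obtain ⟨hs, hl, hlf⟩ := ih (fun i hi => hw i (by omega))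
    have hwk : w k = w' k := hw k (by omega)
    refine ⟨?_, ?_, ?_⟩
    · show QQ (w k) = QQ (w' k); rw [hwk]
    · show len v QQ w k * step v QQ w k (w k) = len v QQ w' k * step v QQ w' k (w' k)
      rw [hs, hl, hwk]
    · show left v QQ w k + _ = left v QQ w' k + _
      rw [hs, hl, hlf, hwk]

lemma pre_coherent (t : ℝ) : ∀ k, ∀ i < k, pre v QQ d t k i = X v QQ d t i := by
  intro k
  induction k with
  | zero => intro i hi; omega
  | succ k ih =>
    intro i hi
    rcases Nat.lt_succ_iff_lt_or_eq.mp hi with hik | rfl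
    · show Function.update (pre v QQ d t k) k _ i = _
      rw [Function.update_of_ne (by omega)]
      exact ih i hik
    · rfl

lemma X_eq_pick {t : ℝ} {w : ℕ → Fin q} {k : ℕ} (hw : ∀ i < k, X v QQ d t i = w i) :
    X v QQ d t k = pick d (fun b => len v QQ w k * step v QQ w k b) (left v QQ w k) t := by
  have h1 : ∀ i < k, pre v QQ d t k i = w i :=
    fun i hi => (pre_coherent d t k i hi).trans (hw i hi)
  obtain ⟨hs, hl, hlf⟩ := prefix_dep h1
  show Function.update (pre v QQ d t k) k (nd v QQ d (pre v QQ d t k) k t) k = _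
  rw [Function.update_self]
  unfold nd
  rw [hs, hl, hlf]

variable (hv : ∀ a, 0 < v a) (hQ : ∀ a b, 0 ≤ QQ a b)
  (hvsum : ∑ a, v a = 1) (hQsum : ∀ a, ∑ b, QQ a b = 1)

include hv hQ in
lemma step_nonneg (w : ℕ → Fin q) (k : ℕ) (b : Fin q) : 0 ≤ step v QQ w k b := by
  cases k with
  | zero => exact (hv b).le
  | succ k => exact hQ _ b

include hvsum hQsum in
lemma step_sum (w : ℕ → Fin q) (k : ℕ) : ∑ b, step v QQ w k b = 1 := by
  cases k with
  | zero => exact hvsum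
  | succ k => exact hQsum _

include hv hQ in
lemma len_nonneg (w : ℕ → Fin q) (k : ℕ) : 0 ≤ len v QQ w k := by
  induction k with
  | zero => exact zero_le_one
  | succ k ih => exact mul_nonneg ih (step_nonneg hv hQ w k (w k))

include hv hQ hvsum hQsum in
lemma interval_nested (w : ℕ → Fin q) (k : ℕ) :
    Ico (left v QQ w (k + 1)) (left v QQ w (k + 1) + len v QQ w (k + 1)) ⊆
      Ico (left v QQ w k) (left v QQ w k + len v QQ w k) := by
  set p : Fin q → ℝ := fun b => len v QQ w k * step v QQ w k b with hp
  have hpn : ∀ b, 0 ≤ p b :=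
    fun b => mul_nonneg (len_nonneg hv hQ w k) (step_nonneg hv hQ w k b)
  have hptot : ∑ b, p b = len v QQ w k := by
    rw [hp, ← Finset.mul_sum, step_sum hvsum hQsum, mul_one]
  apply Ico_subset_Ico
  · show left v QQ w k ≤ left v QQ w k + cum p ((w k : ℕ))
    linarith [cum_nonneg hpn ((w k : ℕ))]
  · show left v QQ w k + cum p ((w k : ℕ)) + len v QQ w k * step v QQ w k (w k) ≤
      left v QQ w k + len v QQ w k
    have h1 : cum p ((w k : ℕ) + 1) = cum p ((w k : ℕ)) + p (w k) := by
      rw [cum_succ p (w k).isLt]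
    have h2 : cum p ((w k : ℕ) + 1) ≤ ∑ b, p b := cum_le_total hpn _
    rw [hptot] at h2
    have : p (w k) = len v QQ w k * step v QQ w k (w k) := rfl
    linarith [h1, h2]

include hv hQ hvsum hQsum in
lemma interval_sub01 (w : ℕ → Fin q) (k : ℕ) :
    Ico (left v QQ w k) (left v QQ w k + len v QQ w k) ⊆ Ico (0 : ℝ) 1 := by
  induction k with
  | zero =>
    show Ico (0:ℝ) (0 + 1) ⊆ Ico (0:ℝ) 1
    rw [zero_add]
  | succ k ih => exact (interval_nested hv hQ hvsum hQsum w k).trans ih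

include hv hQ hvsum hQsum in
lemma X_mem_iff {t : ℝ} (ht : t ∈ Ico (0 : ℝ) 1) (w : ℕ → Fin q) (k : ℕ) :
    (∀ i < k, X v QQ d t i = w i) ↔
      t ∈ Ico (left v QQ w k) (left v QQ w k + len v QQ w k) := by
  induction k with
  | zero =>
    simp only [Nat.not_lt_zero, IsEmpty.forall_iff, forall_const, true_iff]
    show t ∈ Ico (0:ℝ) (0 + 1)
    rwa [zero_add]
  | succ k ih =>
    set p : Fin q → ℝ := fun b => len v QQ w k * step v QQ w k b with hp
    have hpn : ∀ b, 0 ≤ p b :=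
      fun b => mul_nonneg (len_nonneg hv hQ w k) (step_nonneg hv hQ w k b)
    have hptot : ∑ b, p b = len v QQ w k := by
      rw [hp, ← Finset.mul_sum, step_sum hvsum hQsum, mul_one]
    set l : ℝ := left v QQ w k with hl
    have hIco : ∀ {s : ℝ}, s ∈ Ico l (l + len v QQ w k) → s ∈ Ico l (l + ∑ c, p c) := by
      intro s hs; rwa [hptot]
    have hsub : Ico (l + cum p ((w k : ℕ))) (l + cum p ((w k : ℕ) + 1)) =
        Ico (left v QQ w (k+1)) (left v QQ w (k+1) + len v QQ w (k+1)) := by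
      have h1 : left v QQ w (k+1) = l + cum p ((w k : ℕ)) := rfl
      have h2 : cum p ((w k : ℕ) + 1) = cum p ((w k : ℕ)) + p (w k) := by
        rw [cum_succ p (w k).isLt]
      have h3 : len v QQ w (k+1) = p (w k) := rfl
      rw [h1, h2, h3]
      congr 1
      ring
    constructor
    · intro h
      have hk : ∀ i < k, X v QQ d t i = w i := fun i hi => h i (by omega)
      have htI : t ∈ Ico l (l + len v QQ w k) := ih.mp hk
      have hX : X v QQ d t k = pick d p l t := X_eq_pick d hk
      have hb : pick d p l t = w k := hX ▸ h k (by omega)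
      have := (pick_eq_iff d hpn (hIco htI)).mp hb
      rwa [hsub] at this
    · intro hI
      have htI : t ∈ Ico l (l + len v QQ w k) :=
        interval_nested hv hQ hvsum hQsum w k hI
      have hk : ∀ i < k, X v QQ d t i = w i := ih.mpr htI
      intro i hi
      rcases Nat.lt_succ_iff_lt_or_eq.mp hi with hik | rfl
      · exact hk i hik
      · rw [X_eq_pick d hk]
        apply (pick_eq_iff d hpn (hIco htI)).mpr
        rwa [hsub]

include hv hQ in
lemma measurable_X : ∀ k, Measurable (fun t => X v QQ d t k) := by
  intro k
  induction k using Nat.strong_induction_on with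
  | _ k IH =>
  apply measurable_to_countable'
  intro b
  set ext : (Fin k → Fin q) → (ℕ → Fin q) :=
    fun u i => if h : i < k then u ⟨i, h⟩ else d with hext
  have hset : (fun t => X v QQ d t k) ⁻¹' {b} =
      ⋃ u : Fin k → Fin q,
        ((⋂ i : Fin k, {t : ℝ | X v QQ d t (i : ℕ) = u i}) ∩
          {t : ℝ | pick d (fun c => len v QQ (ext u) k * step v QQ (ext u) k c)
            (left v QQ (ext u) k) t = b}) := by
    ext t
    simp only [mem_preimage, mem_singleton_iff, mem_iUnion, mem_inter_iff, mem_iInter,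
      mem_setOf_eq]
    constructor
    · intro h
      refine ⟨fun i => X v QQ d t (i : ℕ), fun i => rfl, ?_⟩
      rw [← X_eq_pick d (w := ext (fun i => X v QQ d t (i : ℕ)))
        (fun i hi => by simp [hext, dif_pos hi])]
      exact h
    · rintro ⟨u, hu, hpick⟩
      have hw : ∀ i < k, X v QQ d t i = ext u i := by
        intro i hi
        rw [hext]
        simp only [dif_pos hi]
        exact hu ⟨i, hi⟩
      rw [X_eq_pick d hw]
      exact hpick
  rw [hset]
  apply MeasurableSet.iUnion
  intro u
  apply MeasurableSet.inter
  · exact MeasurableSet.iInter fun i => (IH (i : ℕ) i.isLt) (measurableSet_singleton (u i))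
  · exact measurable_pick d
      (fun c => mul_nonneg (len_nonneg hv hQ (ext u) k) (step_nonneg hv hQ (ext u) k c)) _
      (measurableSet_singleton b)

end Chain

end Stmt8Aux

section
open Stmt8Aux

/-- Markov-type multifractal measure on the subshift `Λ_A` (the KMS_β state of
the Cuntz–Krieger algebra): if `T_{a,b} = A_{a,b} P_{a,b}` has a positive fixed
vector `v` with `∑_a v_a = 1`, then there is a Borel probability measure `ν` on
`Λ_A` with `ν(Λ_A(w)) = (∏_{j=1}^{k-1} P_{w_j,w_{j+1}}) v_{w_k}` on admissible
cylinders. -/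
theorem stmt8 (q : ℕ) (hq : 2 ≤ q) (A P : Matrix (Fin q) (Fin q) ℝ)
    (hA01 : ∀ a b, A a b = 0 ∨ A a b = 1) (hP : ∀ a b, 0 < P a b)
    (v : Fin q → ℝ) (hv : ∀ a, 0 < v a)
    (heig : ∀ a, ∑ b, A a b * P a b * v b = v a)
    (hnorm : ∑ a, v a = 1) :
    ∃ ν : MeasureTheory.Measure {x : ℕ → Fin q // ∀ k, A (x k) (x (k + 1)) = 1},
      MeasureTheory.IsProbabilityMeasure ν ∧
      ∀ (k : ℕ), 1 ≤ k → ∀ (w : ℕ → Fin q),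
        (∀ j, j + 1 < k → A (w j) (w (j + 1)) = 1) →
        ν {x | ∀ i < k, x.1 i = w i} =
          ENNReal.ofReal
            ((∏ j ∈ Finset.range (k - 1), P (w j) (w (j + 1))) * v (w (k - 1))) := by
  classical
  set d : Fin q := ⟨0, by omega⟩ with hd
  set QQ : Fin q → Fin q → ℝ := fun a b => A a b * P a b * v b / v a with hQQ
  have hQ : ∀ a b, 0 ≤ QQ a b := fun a b =>
    div_nonneg (mul_nonneg (mul_nonneg
      (by rcases hA01 a b with h | h <;> rw [h] <;> norm_num) (hP a b).le) (hv b).le) (hv a).le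
  have hQsum : ∀ a, ∑ b, QQ a b = 1 := by
    intro a
    rw [hQQ]
    simp only
    rw [← Finset.sum_div, heig a, div_self (hv a).ne']
  -- the full-shift measure
  set νfull : Measure (ℕ → Fin q) :=
    Measure.map (fun t (k : ℕ) => X v QQ d t k) ((volume : Measure ℝ).restrict (Ico 0 1))
    with hνfull
  have hXm : Measurable (fun t (k : ℕ) => X v QQ d t k) :=
    measurable_pi_lambda _ fun k => measurable_X d hv hQ k
  -- cylinders are measurable
  have hcylm : ∀ (k : ℕ) (w : ℕ → Fin q),
      MeasurableSet {x : ℕ → Fin q | ∀ i < k, x i = w i} := by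
    intro k w
    have : {x : ℕ → Fin q | ∀ i < k, x i = w i}
        = ⋂ i ∈ Finset.range k, (fun x : ℕ → Fin q => x i) ⁻¹' {w i} := by
      ext x; simp [Finset.mem_range]
    rw [this]
    exact MeasurableSet.biInter (Finset.range k).countable_toSet
      (fun i _ => measurable_pi_apply i (measurableSet_singleton _))
  -- the cylinder formula
  have hcyl : ∀ (k : ℕ) (w : ℕ → Fin q),
      νfull {x : ℕ → Fin q | ∀ i < k, x i = w i} = ENNReal.ofReal (len v QQ w k) := by
    intro k w
    rw [hνfull, Measure.map_apply hXm (hcylm k w),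
      Measure.restrict_apply (hXm (hcylm k w))]
    have hpre : (fun t (k : ℕ) => X v QQ d t k) ⁻¹' {x : ℕ → Fin q | ∀ i < k, x i = w i}
        ∩ Ico 0 1 = Ico (left v QQ w k) (left v QQ w k + len v QQ w k) := by
      ext t
      simp only [mem_inter_iff, mem_preimage, mem_setOf_eq]
      constructor
      · rintro ⟨h1, h2⟩
        exact (X_mem_iff d hv hQ hnorm hQsum h2 w k).mp h1
      · intro h
        have h2 := interval_sub01 hv hQ hnorm hQsum w k h
        exact ⟨(X_mem_iff d hv hQ hnorm hQsum h2 w k).mpr h, h2⟩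
    rw [hpre, Real.volume_Ico]
    congr 1
    ring
  -- νfull is a probability measure
  haveI hbase : IsProbabilityMeasure ((volume : Measure ℝ).restrict (Ico (0:ℝ) 1)) := by
    constructor
    rw [Measure.restrict_apply_univ, Real.volume_Ico]
    norm_num
  haveI hprob : IsProbabilityMeasure νfull := Measure.isProbabilityMeasure_map hXm.aemeasurable
  -- the subshift is measurable and conull
  have hΛm : MeasurableSet {x : ℕ → Fin q | ∀ k, A (x k) (x (k + 1)) = 1} := by
    have : {x : ℕ → Fin q | ∀ k, A (x k) (x (k + 1)) = 1}
        = ⋂ k : ℕ, ⋃ a : Fin q, ⋃ b : Fin q, ⋃ (_ : A a b = 1),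
          ((fun x : ℕ → Fin q => x k) ⁻¹' {a} ∩ (fun x : ℕ → Fin q => x (k + 1)) ⁻¹' {b}) := by
      ext x
      simp only [mem_setOf_eq, mem_iInter, mem_iUnion, mem_inter_iff, mem_preimage,
        mem_singleton_iff]
      constructor
      · intro hx k; exact ⟨x k, x (k + 1), hx k, rfl, rfl⟩
      · rintro hx k
        obtain ⟨a, b, hab, ha, hb⟩ := hx k
        rw [ha, hb]; exact hab
    rw [this]
    exact MeasurableSet.iInter fun k => MeasurableSet.iUnion fun a =>
      MeasurableSet.iUnion fun b => MeasurableSet.iUnion fun _ =>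
        ((measurable_pi_apply k (measurableSet_singleton _)).inter
          (measurable_pi_apply (k + 1) (measurableSet_singleton _)))
  have hQzero : ∀ a b, A a b ≠ 1 → QQ a b = 0 := by
    intro a b h
    rcases hA01 a b with h0 | h1
    · rw [hQQ]; simp only; rw [h0]; ring
    · exact absurd h1 h
  have hnull : νfull {x : ℕ → Fin q | ∀ k, A (x k) (x (k + 1)) = 1}ᶜ = 0 := by
    have key : ∀ k : ℕ, νfull {x : ℕ → Fin q | A (x k) (x (k + 1)) ≠ 1} = 0 := by
      intro k
      apply measure_mono_null (t := ⋃ u : Fin (k + 2) → Fin q,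
        {x : ℕ → Fin q | (∀ i < k + 2, x i = (fun j => if h : j < k + 2 then u ⟨j, h⟩ else d) i)
          ∧ A (u ⟨k, by omega⟩) (u ⟨k + 1, by omega⟩) ≠ 1})
      · intro x hx
        simp only [mem_setOf_eq] at hx
        refine mem_iUnion.mpr ⟨fun j => x j, fun i hi => by simp [dif_pos hi], ?_⟩
        simpa using hx
      · apply measure_iUnion_null
        intro u
        set w : ℕ → Fin q := fun j => if h : j < k + 2 then u ⟨j, h⟩ else d with hw
        by_cases hu : A (u ⟨k, by omega⟩) (u ⟨k + 1, by omega⟩) = 1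
        · have : {x : ℕ → Fin q | (∀ i < k + 2, x i = w i)
              ∧ A (u ⟨k, by omega⟩) (u ⟨k + 1, by omega⟩) ≠ 1} = ∅ := by
            ext x; simp [hu]
          rw [this, measure_empty]
        · have heq : {x : ℕ → Fin q | (∀ i < k + 2, x i = w i)
              ∧ A (u ⟨k, by omega⟩) (u ⟨k + 1, by omega⟩) ≠ 1}
              = {x : ℕ → Fin q | ∀ i < k + 2, x i = w i} := by
            ext x; simp [hu]
          rw [heq, hcyl (k + 2) w]
          have hwk : w k = u ⟨k, by omega⟩ := by simp [hw]
          have hwk1 : w (k + 1) = u ⟨k + 1, by omega⟩ := by simp [hw]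
          have hlen : len v QQ w (k + 2) = 0 := by
            show len v QQ w (k + 1) * step v QQ w (k + 1) (w (k + 1)) = 0
            have hst : step v QQ w (k + 1) (w (k + 1)) = QQ (w k) (w (k + 1)) := rfl
            rw [hst, hwk, hwk1, hQzero _ _ hu, mul_zero]
          rw [hlen]
          simp
    have hcompl : {x : ℕ → Fin q | ∀ k, A (x k) (x (k + 1)) = 1}ᶜ
        = ⋃ k : ℕ, {x : ℕ → Fin q | A (x k) (x (k + 1)) ≠ 1} := by
      ext x; simp
    rw [hcompl]
    exact measure_iUnion_null key
  have hΛ1 : νfull {x : ℕ → Fin q | ∀ k, A (x k) (x (k + 1)) = 1} = 1 :=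
    (prob_compl_eq_zero_iff hΛm).mp hnull
  -- transfer to the subtype
  have he : MeasurableEmbedding
      (Subtype.val : {x : ℕ → Fin q // ∀ k, A (x k) (x (k + 1)) = 1} → (ℕ → Fin q)) :=
    MeasurableEmbedding.subtype_coe hΛm
  have hcomap : ∀ s, MeasurableSet s →
      Measure.comap Subtype.val νfull s = νfull (Subtype.val '' s) :=
    fun s hs => Measure.comap_apply _ he.injective
      (fun t ht => he.measurableSet_image' ht) _ hs
  refine ⟨Measure.comap Subtype.val νfull, ?_, ?_⟩
  · constructor
    rw [hcomap univ MeasurableSet.univ, image_univ, Subtype.range_coe_subtype]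
    exact hΛ1
  · intro k hk w hadm
    -- admissible length formula
    have hlen_adm : ∀ k : ℕ, 1 ≤ k → ∀ w : ℕ → Fin q,
        (∀ j, j + 1 < k → A (w j) (w (j + 1)) = 1) →
        len v QQ w k = (∏ j ∈ Finset.range (k - 1), P (w j) (w (j + 1))) * v (w (k - 1)) := by
      intro k
      induction k with
      | zero => omega
      | succ k ih =>
        intro _ w hadm
        by_cases hk0 : k = 0
        · subst hk0
          show len v QQ w 0 * step v QQ w 0 (w 0) = _
          simp [Stmt8Aux.len, Stmt8Aux.step]
        · have hk1 : 1 ≤ k := by omega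
          have ihk := ih hk1 w (fun j hj => hadm j (by omega))
          show len v QQ w k * step v QQ w k (w k) = _
          have hstep : step v QQ w k (w k) = QQ (w (k - 1)) (w k) := by
            obtain ⟨k', rfl⟩ : ∃ k', k = k' + 1 := ⟨k - 1, by omega⟩
            simp [Stmt8Aux.step]
          have hA1 : A (w (k - 1)) (w k) = 1 := by
            have := hadm (k - 1) (by omega)
            have hkk : k - 1 + 1 = k := by omega
            rwa [hkk] at this
          have hQval : QQ (w (k - 1)) (w k) = P (w (k - 1)) (w k) * v (w k) / v (w (k - 1)) := by
            rw [hQQ]; simp only; rw [hA1, one_mul]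
          have hprod : ∏ j ∈ Finset.range (k + 1 - 1), P (w j) (w (j + 1))
              = (∏ j ∈ Finset.range (k - 1), P (w j) (w (j + 1))) * P (w (k - 1)) (w k) := by
            have h1 : k + 1 - 1 = (k - 1) + 1 := by omega
            rw [h1, Finset.prod_range_succ, Nat.sub_add_cancel hk1]
          rw [ihk, hstep, hQval, hprod]
          have hne : v (w (k - 1)) ≠ 0 := (hv (w (k - 1))).ne'
          have hkk : k + 1 - 1 = k := by omega
          rw [hkk]
          field_simp
    have hmcyl : MeasurableSet
        {x : {x : ℕ → Fin q // ∀ k, A (x k) (x (k + 1)) = 1} | ∀ i < k, x.1 i = w i} :=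
      he.measurable (hcylm k w)
    rw [hcomap _ hmcyl]
    have himg : Subtype.val ''
        {x : {x : ℕ → Fin q // ∀ k, A (x k) (x (k + 1)) = 1} | ∀ i < k, x.1 i = w i}
        = {x : ℕ → Fin q | ∀ k, A (x k) (x (k + 1)) = 1}
          ∩ {x : ℕ → Fin q | ∀ i < k, x i = w i} := by
      rw [show {x : {x : ℕ → Fin q // ∀ k, A (x k) (x (k + 1)) = 1} | ∀ i < k, x.1 i = w i}
          = (Subtype.val : {x : ℕ → Fin q // ∀ k, A (x k) (x (k + 1)) = 1} → (ℕ → Fin q))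
            ⁻¹' {x : ℕ → Fin q | ∀ i < k, x i = w i} from rfl]
      exact Subtype.image_preimage_coe _ _
    rw [himg, inter_comm, measure_inter_conull hnull, hcyl k w, hlen_adm k hk w hadm]

end
end

section
/- Let 𝒮 be a symmetric q×q real matrix with positive entries, A a q×q matrix with entries in {0,1}, Ã_{a,b} = A_{a,b}𝒮_{a,b}, and suppose λ̃ > 0 and v is a positive vector with Σ_a Ã_{a,b} v_a = λ̃ v_b for all b. For admissible words define ν(u_1,…,u_k) = (v_{u_1} v_{u_k}^{−1}/(q λ̃^{k−1})) Π_{j=1}^{k−1} 𝒮_{u_j,u_{j+1}}. Fix 𝒩 > 0 and define entropies S_a by e^{−S_a/2} = 𝒩 v_a. Then the process Φ_a(m+1) := λ̃^m e^{S_a/2} Σ_{w ∈ 𝔄^m, (a,w_1,…,w_m) admissible} ν(a,w_1,…,w_m) satisfies, for all m ≥ 1 and all a ∈ 𝔄, the recursion Φ_a(m+1) = Σ_{b∈𝔄} A_{a,b} 𝒮_{a,b} Φ_b(m); i.e., it is a stochastic process on the pruned Eternal Symmetree whose transitions are governed by the stochastic matrix 𝒮 restricted to admissible transitions. -/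
open scoped Classical

/-- The Markov cylinder weight `ν(u_1,…,u_k) =
(v_{u_1} v_{u_k}⁻¹/(q λ̃^{k-1})) ∏_{j=1}^{k-1} 𝒮_{u_j,u_{j+1}}` of a word of
length `k` (given as a function `ℕ → Fin q`, only the first `k` values matter). -/
noncomputable def nuWord {q : ℕ} (M : Matrix (Fin q) (Fin q) ℝ) (v : Fin q → ℝ)
    (lam : ℝ) (w : ℕ → Fin q) (k : ℕ) : ℝ :=
  (v (w 0) * (v (w (k - 1)))⁻¹ / (q * lam ^ (k - 1))) *
    ∏ j ∈ Finset.range (k - 1), M (w j) (w (j + 1))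

/-- The word `(a, u_1, …, u_m)` of length `m + 1`, as a function `ℕ → Fin q`. -/
def wordCons {q m : ℕ} (a : Fin q) (u : Fin m → Fin q) : ℕ → Fin q :=
  fun i => if h : 1 ≤ i ∧ i ≤ m then u ⟨i - 1, by omega⟩ else a

/-- The process on the pruned Eternal Symmetree:
`Φ_a(m) = λ̃^{m-1} e^{S_a/2} ∑_{u ∈ 𝔄^{m-1}, (a,u) admissible} ν(a,u_1,…,u_{m-1})`. -/
noncomputable def PhiPruned {q : ℕ} (A M : Matrix (Fin q) (Fin q) ℝ)
    (v : Fin q → ℝ) (lam : ℝ) (Ent : Fin q → ℝ) (a : Fin q) (m : ℕ) : ℝ :=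
  lam ^ (m - 1) * Real.exp (Ent a / 2) *
    ∑ u ∈ Finset.univ.filter
        (fun u : Fin (m - 1) → Fin q =>
          ∀ j, j + 1 < m → A (wordCons a u j) (wordCons a u (j + 1)) = 1),
      nuWord M v lam (wordCons a u) m

lemma wordCons_zero' {q m : ℕ} (a : Fin q) (u : Fin m → Fin q) :
    wordCons a u 0 = a := by
  simp [wordCons]

lemma wordCons_cons' {q n : ℕ} (a b : Fin q) (t : Fin n → Fin q) (j : ℕ) (hj : j ≤ n) :
    wordCons a (Fin.cons b t) (j + 1) = wordCons b t j := by
  unfold wordCons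
  rcases Nat.eq_zero_or_pos j with h | h
  · subst h
    simp
  · obtain ⟨j', rfl⟩ : ∃ j', j = j' + 1 := ⟨j - 1, by omega⟩
    rw [dif_pos (by omega : 1 ≤ j' + 1 + 1 ∧ j' + 1 + 1 ≤ n + 1),
      dif_pos (⟨by omega, by omega⟩ : 1 ≤ j' + 1 ∧ j' + 1 ≤ n)]
    have : (⟨j' + 1 + 1 - 1, by omega⟩ : Fin (n + 1)) = Fin.succ ⟨j', by omega⟩ := rfl
    rw [this, Fin.cons_succ]
    rfl

lemma sum_fun_succ' {q n : ℕ} (F : (Fin (n + 1) → Fin q) → ℝ) :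
    ∑ u : Fin (n + 1) → Fin q, F u =
      ∑ b : Fin q, ∑ t : Fin n → Fin q, F (Fin.cons b t) := by
  rw [← Fintype.sum_equiv (Fin.consEquiv fun _ : Fin (n + 1) => Fin q)
    (fun p => F (Fin.cons p.1 p.2)) F fun p => rfl]
  exact Fintype.sum_prod_type _

lemma aux11 (q n : ℕ) (M A : Matrix (Fin q) (Fin q) ℝ)
    (hA01 : ∀ a b, A a b = 0 ∨ A a b = 1)
    (lam : ℝ) (hlam : 0 < lam) (v : Fin q → ℝ) (hv : ∀ a, 0 < v a)
    (N : ℝ) (hN : 0 < N) (Ent : Fin q → ℝ)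
    (hEnt : ∀ a, Real.exp (-(Ent a) / 2) = N * v a) (a : Fin q) :
    lam ^ (n + 1) * Real.exp (Ent a / 2) *
      ∑ u ∈ Finset.univ.filter
          (fun u : Fin (n + 1) → Fin q =>
            ∀ j, j + 1 < n + 1 + 1 → A (wordCons a u j) (wordCons a u (j + 1)) = 1),
        nuWord M v lam (wordCons a u) (n + 1 + 1) =
    ∑ b, A a b * M a b *
      (lam ^ n * Real.exp (Ent b / 2) *
        ∑ t ∈ Finset.univ.filter
            (fun t : Fin n → Fin q =>
              ∀ j, j + 1 < n + 1 → A (wordCons b t j) (wordCons b t (j + 1)) = 1),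
          nuWord M v lam (wordCons b t) (n + 1)) := by
  have hE : ∀ c, Real.exp (Ent c / 2) = (N * v c)⁻¹ := by
    intro c
    rw [← hEnt c, neg_div, Real.exp_neg, inv_inv]
  simp only [Finset.sum_filter]
  rw [Finset.mul_sum, sum_fun_succ']
  refine Finset.sum_congr rfl (fun b _ => ?_)
  rw [Finset.mul_sum, Finset.mul_sum]
  refine Finset.sum_congr rfl (fun t _ => ?_)
  have hw : ∀ j ≤ n, wordCons a (Fin.cons b t) (j + 1) = wordCons b t j :=
    fun j hj => wordCons_cons' a b t j hj
  have hw0 : wordCons a (Fin.cons b t) 0 = a := wordCons_zero' _ _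
  have hw1 : wordCons a (Fin.cons b t) 1 = b := by
    have h := hw 0 (Nat.zero_le _)
    rw [wordCons_zero'] at h
    exact h
  have hiff : (∀ j, j + 1 < n + 1 + 1 →
      A (wordCons a (Fin.cons b t) j) (wordCons a (Fin.cons b t) (j + 1)) = 1) ↔
      (A a b = 1 ∧ ∀ j, j + 1 < n + 1 →
        A (wordCons b t j) (wordCons b t (j + 1)) = 1) := by
    constructor
    · intro h
      refine ⟨by have := h 0 (by omega); rwa [hw0, hw1] at this, fun j hj => ?_⟩
      have := h (j + 1) (by omega)
      rwa [hw j (by omega), hw (j + 1) (by omega)] at this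
    · rintro ⟨h1, h2⟩ j hj
      rcases Nat.eq_zero_or_pos j with h | h
      · subst h; rwa [hw0, hw1]
      · obtain ⟨j', rfl⟩ : ∃ j', j = j' + 1 := ⟨j - 1, by omega⟩
        rw [hw j' (by omega), hw (j' + 1) (by omega)]
        exact h2 j' (by omega)
  rw [hiff]
  by_cases hQ : ∀ j, j + 1 < n + 1 → A (wordCons b t j) (wordCons b t (j + 1)) = 1
  · rcases hA01 a b with hab | hab
    · rw [if_neg (by rw [hab]; rintro ⟨h, -⟩; norm_num at h), hab]
      ring
    · rw [if_pos ⟨hab, hQ⟩, if_pos hQ, hab]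
      unfold nuWord
      simp only [Nat.add_sub_cancel]
      rw [Finset.prod_range_succ', hw0, hw1,
        Finset.prod_congr rfl (fun j hj => by
          rw [hw j (by have := Finset.mem_range.mp hj; omega),
            hw (j + 1) (by have := Finset.mem_range.mp hj; omega)]),
        hw n (le_refl n), wordCons_zero']
      rw [hE a, hE b]
      have hva : v a ≠ 0 := (hv a).ne'
      have hvb : v b ≠ 0 := (hv b).ne'
      have hvx : v (wordCons b t n) ≠ 0 := (hv _).ne'
      have hlne : lam ≠ 0 := hlam.ne'
      have hNne : N ≠ 0 := hN.ne'
      have hqne : (q : ℝ) ≠ 0 := (Nat.cast_pos.mpr a.pos).ne'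
      field_simp
  · rw [if_neg (by rintro ⟨-, h⟩; exact hQ h), if_neg hQ]
    ring

/-- The multifractal measure of the KMS state on the Cuntz–Krieger algebra of
the pruned tree defines a stochastic process governed by `𝒮` restricted to
admissible transitions: `Φ_a(m+1) = ∑_b A_{a,b} 𝒮_{a,b} Φ_b(m)`, where
`λ̃` and `v` are a positive eigenpair of the transpose of `Ã = A ∘ 𝒮` and the
entropies satisfy `e^{-S_a/2}/𝒩 = v_a`. -/
theorem stmt11 (q : ℕ) (hq : 2 ≤ q) (M A : Matrix (Fin q) (Fin q) ℝ)
    (hM : ∀ a b, 0 < M a b) (hMsymm : M.IsSymm)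
    (hA01 : ∀ a b, A a b = 0 ∨ A a b = 1)
    (At : Matrix (Fin q) (Fin q) ℝ) (hAt : ∀ a b, At a b = A a b * M a b)
    (lam : ℝ) (hlam : 0 < lam)
    (v : Fin q → ℝ) (hv : ∀ a, 0 < v a)
    (heig : ∀ b, ∑ a, At a b * v a = lam * v b)
    (N : ℝ) (hN : 0 < N) (Ent : Fin q → ℝ)
    (hEnt : ∀ a, Real.exp (-(Ent a) / 2) = N * v a) :
    ∀ m ≥ 1, ∀ a : Fin q,
      PhiPruned A M v lam Ent a (m + 1) =
        ∑ b, A a b * M a b * PhiPruned A M v lam Ent b m := by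
  intro m hm a
  obtain ⟨n, rfl⟩ : ∃ n, m = n + 1 := ⟨m - 1, by omega⟩
  exact aux11 q n M A hA01 lam hlam v hv N hN Ent hEnt a
end

section
/- Let λ ∈ (0,1), let m be an r×r real matrix and m′ an r×s real matrix, both with nonnegative entries, and suppose the series h := Σ_{k=0}^∞ (λm)^k (λ m′ 𝟙_s) converges in ℝ^r (for instance if the operator norm of λm is < 1), where 𝟙_s ∈ ℝ^s is the all-ones vector. Let A_G be the (r+s)×(r+s) block matrix with blocks [[λm, λm′],[0, I_s]]. Then the vector g := (h, 𝟙_s) ∈ ℝ^{r+s} satisfies A_G g = g; equivalently, g solves the special graph weight equations g_i = Σ_{j≤r} λ m_{i,j} g_j + Σ_{t≤s} λ m′_{i,t} g_{r+t} for i ≤ r and g_{r+t} = g_{r+t} for t ≤ s, with eigenvalue λ_G = 1. Moreover, if for every i ≤ r there exist k ≥ 0 and j ≤ r with (m^k)_{i,j} > 0 and Σ_{t} m′_{j,t} > 0, then every entry of g is positive, so g defines a faithful special graph weight. -/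
/-- Construction of a faithful special graph weight on the dual graph of a
Mumford curve: for `λ ∈ (0,1)` and nonnegative matrices `m` (non-sink to
non-sink) and `m'` (non-sink to sink), if `h = ∑_k (λm)^k (λ m' 𝟙)` converges,
then `g = (h, 𝟙)` is a fixed vector of the block matrix
`A_G = [[λm, λm'],[0, 1]]` (i.e. solves the special graph weight equations with
eigenvalue `λ_G = 1`); and if from every non-sink vertex some power of `m`
reaches a vertex with an edge to a sink, then `g` is everywhere positive,
hence a faithful special graph weight. -/
theorem stmt14 (r s : ℕ) (lam : ℝ) (hlam : lam ∈ Set.Ioo (0 : ℝ) 1)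
    (m : Matrix (Fin r) (Fin r) ℝ) (m' : Matrix (Fin r) (Fin s) ℝ)
    (hm : ∀ i j, 0 ≤ m i j) (hm' : ∀ i t, 0 ≤ m' i t)
    (hsum : Summable fun k : ℕ => ((lam • m) ^ k).mulVec ((lam • m').mulVec 1))
    (h : Fin r → ℝ)
    (hh : h = ∑' k : ℕ, ((lam • m) ^ k).mulVec ((lam • m').mulVec 1))
    (AG : Matrix (Fin r ⊕ Fin s) (Fin r ⊕ Fin s) ℝ)
    (hAG : AG = Matrix.fromBlocks (lam • m) (lam • m') 0 1)
    (g : Fin r ⊕ Fin s → ℝ) (hg : g = Sum.elim h 1) :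
    AG.mulVec g = g ∧
    ((∀ i : Fin r, ∃ k : ℕ, ∃ j : Fin r, 0 < (m ^ k) i j ∧ 0 < ∑ t, m' j t) →
      ∀ i, 0 < g i) := by
  obtain ⟨hlam0, hlam1⟩ := hlam
  set A : Matrix (Fin r) (Fin r) ℝ := lam • m with hA
  set b : Fin r → ℝ := (lam • m').mulVec 1 with hb
  set f : ℕ → Fin r → ℝ := fun k => (A ^ k).mulVec b with hf
  -- nonnegativity of entries of A^k
  have hApow : ∀ k i j, 0 ≤ (A ^ k) i j := by
    intro k
    induction k with
    | zero => intro i j; simp [Matrix.one_apply]; positivity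
    | succ n ih =>
      intro i j
      rw [pow_succ]
      simp only [Matrix.mul_apply]
      apply Finset.sum_nonneg
      intro l _
      refine mul_nonneg (ih i l) ?_
      simp only [hA, Matrix.smul_apply, smul_eq_mul]
      exact mul_nonneg hlam0.le (hm l j)
  have hbval : ∀ j, b j = lam * ∑ t, m' j t := by
    intro j
    simp [hb, Matrix.mulVec, dotProduct, Finset.mul_sum]
  have hbnn : ∀ j, 0 ≤ b j := by
    intro j
    rw [hbval]
    exact mul_nonneg hlam0.le (Finset.sum_nonneg fun t _ => hm' j t)
  have hfnn : ∀ k i, 0 ≤ f k i := by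
    intro k i
    simp only [hf, Matrix.mulVec, dotProduct]
    exact Finset.sum_nonneg fun j _ => mul_nonneg (hApow k i j) (hbnn j)
  -- fixed point equation for h
  have hfix : A.mulVec h + b = h := by
    have L : (Fin r → ℝ) →L[ℝ] (Fin r → ℝ) :=
      LinearMap.toContinuousLinearMap A.mulVecLin
    have key : tsum f = b + A.mulVec (tsum f) := by
      conv_lhs => rw [Summable.tsum_eq_zero_add hsum]
      congr 1
      · simp [hf]
      · have hsum' : Summable fun k : ℕ => f (k + 1) :=
          (summable_nat_add_iff 1).2 hsum
        have : ∀ k : ℕ, f (k + 1) =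
            (LinearMap.toContinuousLinearMap A.mulVecLin) (f k) := by
          intro k
          simp only [hf, pow_succ']
          rw [← Matrix.mulVec_mulVec]
          rfl
        calc (∑' k : ℕ, f (k + 1))
            = ∑' k : ℕ, (LinearMap.toContinuousLinearMap A.mulVecLin) (f k) := by
              exact tsum_congr this
          _ = (LinearMap.toContinuousLinearMap A.mulVecLin) (∑' k, f k) :=
              (ContinuousLinearMap.map_tsum _ hsum).symm
          _ = A.mulVec (tsum f) := rfl
    rw [add_comm, hh]
    exact key.symm
  constructor
  · funext i
    rw [hAG, hg, Matrix.fromBlocks_mulVec]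
    cases i with
    | inl i =>
      simp only [Sum.elim_inl]
      have := congrFun hfix i
      simpa using this
    | inr t =>
      simp [Matrix.mulVec, dotProduct, Matrix.one_apply]
  · intro hreach i
    cases i with
    | inr t => simp [hg]
    | inl i =>
      obtain ⟨k, j, hmk, hm'j⟩ := hreach i
      have hgi : g (Sum.inl i) = h i := by rw [hg]; rfl
      rw [hgi, hh]
      have hsummi : Summable fun n : ℕ => f n i := by
        have := Pi.summable.mp hsum
        exact this i
      have htsum : (∑' n : ℕ, f n) i = ∑' n : ℕ, f n i :=
        tsum_apply hsum
      have hle : f k i ≤ ∑' n : ℕ, f n i :=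
        Summable.le_tsum hsummi k (fun n _ => hfnn n i)
      have hpos : 0 < f k i := by
        simp only [hf, Matrix.mulVec, dotProduct]
        apply Finset.sum_pos' (fun l _ => mul_nonneg (hApow k i l) (hbnn l))
        refine ⟨j, Finset.mem_univ j, ?_⟩
        have hAk : (A ^ k) i j = lam ^ k * (m ^ k) i j := by
          rw [hA, smul_pow]; rfl
        rw [hAk, hbval]
        positivity
      calc 0 < f k i := hpos
        _ ≤ ∑' n : ℕ, f n i := hle
        _ = (∑' n : ℕ, f n) i := htsum.symm
end

section
/- Let A be a q×q matrix with entries in {0,1} which is irreducible, with Perron–Frobenius eigenvalue λ_A > 0 and positive right eigenvector v (A v = λ_A v), normalized so that Σ_{a∈𝔄} v_a = λ_A. Then there exists a Borel probability measure μ on the subshift space Λ_A such that for every admissible word w = (w_1,…,w_k) with k ≥ 1, μ(Λ_A(w)) = λ_A^{−k} v_{w_k}. This is the self-similar (Perron–Frobenius) measure on Λ_{𝔄,A} underlying the unique KMS state of the Cuntz–Krieger algebra 𝒪_{𝔄,A} at inverse temperature equal to the Hausdorff dimension log λ_A / log q. -/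
namespace CK15

variable {q : ℕ} (A : Matrix (Fin q) (Fin q) ℝ) (lamA : ℝ) (v : Fin q → ℝ)

/-- The factor contributed by position `j` of a word. -/
noncomputable def c (j : ℕ) (w : ℕ → Fin q) : ℝ :=
  if j = 0 then v (w 0) / lamA
  else A (w (j - 1)) (w j) * v (w j) / (lamA * v (w (j - 1)))

/-- Length of the interval of the word `w 0, …, w (k-1)`. -/
noncomputable def len (k : ℕ) (w : ℕ → Fin q) : ℝ :=
  ∏ j ∈ Finset.range k, c A lamA v j w

/-- Partial sums of children interval lengths, starting at `L`. -/
noncomputable def sAux (L : ℝ) (k : ℕ) (w : ℕ → Fin q) : ℕ → ℝ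
  | 0 => L
  | m + 1 => sAux L k w m +
      if h : m < q then len A lamA v (k + 1) (Function.update w k ⟨m, h⟩) else 0

/-- Left endpoint of the interval of the word `w 0, …, w (k-1)`. -/
noncomputable def lft : ℕ → (ℕ → Fin q) → ℝ
  | 0, _ => 0
  | k + 1, w => sAux A lamA v (lft k w) k w (w k)

section lemmas

lemma c_nonneg (hA01 : ∀ a b, A a b = 0 ∨ A a b = 1) (hlam : 0 < lamA) (hv : ∀ a, 0 < v a)
    (j : ℕ) (w : ℕ → Fin q) : 0 ≤ c A lamA v j w := by
  unfold c
  split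
  · have := hv (w 0)
    positivity
  · rcases hA01 (w (j - 1)) (w j) with h | h <;> rw [h]
    · simp
    · rw [one_mul]
      have h1 := hv (w j); have h2 := hv (w (j-1))
      positivity

lemma len_nonneg (hA01 : ∀ a b, A a b = 0 ∨ A a b = 1) (hlam : 0 < lamA) (hv : ∀ a, 0 < v a)
    (k : ℕ) (w : ℕ → Fin q) : 0 ≤ len A lamA v k w :=
  Finset.prod_nonneg fun j _ => c_nonneg A lamA v hA01 hlam hv j w

lemma len_zero (w : ℕ → Fin q) : len A lamA v 0 w = 1 := by simp [len]

lemma len_succ (k : ℕ) (w : ℕ → Fin q) :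
    len A lamA v (k + 1) w = len A lamA v k w * c A lamA v k w :=
  Finset.prod_range_succ _ _

lemma c_congr {j : ℕ} {w w' : ℕ → Fin q} (h : ∀ i ≤ j, w i = w' i) :
    c A lamA v j w = c A lamA v j w' := by
  unfold c
  rw [h 0 (Nat.zero_le _), h j le_rfl, h (j-1) (Nat.sub_le _ _)]

lemma len_congr {k : ℕ} {w w' : ℕ → Fin q} (h : ∀ i < k, w i = w' i) :
    len A lamA v k w = len A lamA v k w' :=
  Finset.prod_congr rfl fun j hj => c_congr A lamA v fun i hi =>
    h i (lt_of_le_of_lt hi (Finset.mem_range.mp hj))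

lemma sAux_congr {k : ℕ} {w w' : ℕ → Fin q} (L : ℝ) (h : ∀ i < k, w i = w' i) (m : ℕ) :
    sAux A lamA v L k w m = sAux A lamA v L k w' m := by
  induction m with
  | zero => rfl
  | succ m ih =>
    unfold sAux
    rw [ih]
    congr 1
    split
    · exact len_congr A lamA v fun i hi => by
        rcases Nat.lt_succ_iff_lt_or_eq.mp hi with hi | hi
        · rw [Function.update_of_ne (Nat.ne_of_lt hi), Function.update_of_ne (Nat.ne_of_lt hi)]
          exact h i hi
        · subst hi; simp
    · rfl

lemma lft_congr : ∀ {k : ℕ} {w w' : ℕ → Fin q}, (∀ i < k, w i = w' i) →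
    lft A lamA v k w = lft A lamA v k w'
  | 0, _, _, _ => rfl
  | k + 1, w, w', h => by
    have h' : ∀ i < k, w i = w' i := fun i hi => h i (Nat.lt_succ_of_lt hi)
    show sAux A lamA v (lft A lamA v k w) k w (w k) = _
    rw [lft_congr h', sAux_congr A lamA v _ h', h k (Nat.lt_succ_self k)]
    rfl

lemma sum_c (hlam : 0 < lamA) (hv : ∀ a, 0 < v a)
    (heig : A.mulVec v = lamA • v) (hnorm : ∑ a, v a = lamA)
    (k : ℕ) (w : ℕ → Fin q) :
    ∑ b : Fin q, c A lamA v k (Function.update w k b) = 1 := by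
  cases k with
  | zero =>
    have : ∀ b : Fin q, c A lamA v 0 (Function.update w 0 b) = v b / lamA := by
      intro b; unfold c; simp
    rw [Finset.sum_congr rfl fun b _ => this b, ← Finset.sum_div, hnorm,
      div_self hlam.ne']
  | succ j =>
    have hne : j ≠ j + 1 := by omega
    have : ∀ b : Fin q, c A lamA v (j + 1) (Function.update w (j + 1) b)
        = A (w j) b * v b / (lamA * v (w j)) := by
      intro b; unfold c
      simp only [if_neg (Nat.succ_ne_zero j), Nat.succ_sub_one,
        Function.update_self, Function.update_of_ne hne]
    rw [Finset.sum_congr rfl fun b _ => this b, ← Finset.sum_div]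
    have hmv : ∑ b : Fin q, A (w j) b * v b = lamA * v (w j) := by
      have := congrFun heig (w j)
      simpa [Matrix.mulVec, dotProduct] using this
    rw [hmv, div_self (by have := hv (w j); positivity)]

lemma sAux_apply (L : ℝ) (k : ℕ) (w : ℕ → Fin q) (m : ℕ) :
    sAux A lamA v L k w m = L + ∑ j ∈ Finset.range m,
      (if h : j < q then len A lamA v (k + 1) (Function.update w k ⟨j, h⟩) else 0) := by
  induction m with
  | zero => simp [sAux]
  | succ m ih => rw [sAux, ih, Finset.sum_range_succ]; ring

lemma sAux_top (hA01 : ∀ a b, A a b = 0 ∨ A a b = 1) (hlam : 0 < lamA) (hv : ∀ a, 0 < v a)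
    (heig : A.mulVec v = lamA • v) (hnorm : ∑ a, v a = lamA)
    (L : ℝ) (k : ℕ) (w : ℕ → Fin q) :
    sAux A lamA v L k w q = L + len A lamA v k w := by
  rw [sAux_apply]
  congr 1
  rw [Finset.sum_dite_of_true (fun j hj => Finset.mem_range.mp hj)]
  have : ∀ b : Fin q, len A lamA v (k + 1) (Function.update w k b)
      = len A lamA v k w * c A lamA v k (Function.update w k b) := by
    intro b
    rw [len_succ]
    congr 1
    exact len_congr A lamA v fun i hi => Function.update_of_ne (Nat.ne_of_lt hi) _ _
  calc (∑ j ∈ Finset.attach (Finset.range q), len A lamA v (k + 1)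
          (Function.update w k ⟨j.1, Finset.mem_range.mp j.2⟩))
      = ∑ b : Fin q, len A lamA v (k + 1) (Function.update w k b) := by
        apply Finset.sum_nbij' (fun j => (⟨j.1, Finset.mem_range.mp j.2⟩ : Fin q))
          (fun b => ⟨b.1, Finset.mem_range.mpr b.2⟩) <;> simp
    _ = len A lamA v k w := by
        rw [Finset.sum_congr rfl fun b _ => this b, ← Finset.mul_sum,
          sum_c A lamA v hlam hv heig hnorm, mul_one]

lemma sAux_mono (hA01 : ∀ a b, A a b = 0 ∨ A a b = 1) (hlam : 0 < lamA) (hv : ∀ a, 0 < v a)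
    (L : ℝ) (k : ℕ) (w : ℕ → Fin q) {m m' : ℕ} (h : m ≤ m') :
    sAux A lamA v L k w m ≤ sAux A lamA v L k w m' := by
  have step : ∀ n : ℕ, sAux A lamA v L k w n ≤ sAux A lamA v L k w (n + 1) := by
    intro n
    rw [sAux]
    have : (0:ℝ) ≤ if h : n < q then
        len A lamA v (k + 1) (Function.update w k ⟨n, h⟩) else 0 := by
      split
      · exact len_nonneg A lamA v hA01 hlam hv _ _
      · exact le_refl 0
    linarith
  exact monotone_nat_of_le_succ step h

lemma sAux_succ_coe (L : ℝ) (k : ℕ) (w : ℕ → Fin q) (b : Fin q) :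
    sAux A lamA v L k w (b + 1)
      = sAux A lamA v L k w b + len A lamA v (k + 1) (Function.update w k b) := by
  rw [sAux, dif_pos b.2]

lemma lft_succ (k : ℕ) (w : ℕ → Fin q) :
    lft A lamA v (k + 1) w = sAux A lamA v (lft A lamA v k w) k w (w k) := rfl

lemma nesting (hA01 : ∀ a b, A a b = 0 ∨ A a b = 1) (hlam : 0 < lamA) (hv : ∀ a, 0 < v a)
    (heig : A.mulVec v = lamA • v) (hnorm : ∑ a, v a = lamA) (k : ℕ) (w : ℕ → Fin q) :
    lft A lamA v k w ≤ lft A lamA v (k + 1) w ∧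
      lft A lamA v (k + 1) w + len A lamA v (k + 1) w
        ≤ lft A lamA v k w + len A lamA v k w := by
  constructor
  · rw [lft_succ]
    exact sAux_mono A lamA v hA01 hlam hv _ _ _ (Nat.zero_le _)
  · have h1 : lft A lamA v (k + 1) w + len A lamA v (k + 1) w
        = sAux A lamA v (lft A lamA v k w) k w ((w k : ℕ) + 1) := by
      rw [lft_succ, sAux_succ_coe]
      congr 1
      refine len_congr A lamA v fun i hi => ?_
      by_cases h : i = k
      · subst h; simp
      · rw [Function.update_of_ne h]
    rw [h1, ← sAux_top A lamA v hA01 hlam hv heig hnorm (lft A lamA v k w) k w]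
    exact sAux_mono A lamA v hA01 hlam hv _ _ _ (w k).2

lemma interval_sub (hA01 : ∀ a b, A a b = 0 ∨ A a b = 1) (hlam : 0 < lamA) (hv : ∀ a, 0 < v a)
    (heig : A.mulVec v = lamA • v) (hnorm : ∑ a, v a = lamA) (k : ℕ) (w : ℕ → Fin q) :
    0 ≤ lft A lamA v k w ∧ lft A lamA v k w + len A lamA v k w ≤ 1 := by
  induction k with
  | zero => simp [lft, len_zero]
  | succ k ih =>
    obtain ⟨h1, h2⟩ := nesting A lamA v hA01 hlam hv heig hnorm k w
    exact ⟨le_trans ih.1 h1, le_trans h2 ih.2⟩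

lemma exists_bracket {f : ℕ → ℝ} {u : ℝ} (hmono : ∀ m m', m ≤ m' → f m ≤ f m') :
    ∀ N : ℕ, f 0 ≤ u → u < f N → ∃ m < N, f m ≤ u ∧ u < f (m + 1) := by
  intro N
  induction N with
  | zero => intro h0 hN; linarith
  | succ N ih =>
    intro h0 hN
    by_cases h : f N ≤ u
    · exact ⟨N, Nat.lt_succ_self N, h, hN⟩
    · push_neg at h
      obtain ⟨m, hm, h1, h2⟩ := ih h0 h
      exact ⟨m, Nat.lt_succ_of_lt hm, h1, h2⟩

/-- The coding map: `W u k` is (an extension of) the length-`k` word whose interval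
contains `u`. -/
noncomputable def W [NeZero q] (u : ℝ) : ℕ → (ℕ → Fin q)
  | 0 => fun _ => 0
  | k + 1 =>
    let w := W u k
    Function.update w k
      (if h : ∃ b : Fin q, sAux A lamA v (lft A lamA v k w) k w b ≤ u ∧
          u < sAux A lamA v (lft A lamA v k w) k w (b + 1) then h.choose else 0)

lemma W_stable [NeZero q] (u : ℝ) {k k' : ℕ} (h : k ≤ k') {i : ℕ} (hi : i < k) :
    W A lamA v u k' i = W A lamA v u k i := by
  induction k' with
  | zero => omega
  | succ k' ih =>
    rcases Nat.lt_succ_iff_lt_or_eq.mp (Nat.lt_succ_of_le h) with h' | h'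
    · have hk : k ≤ k' := Nat.lt_succ_iff.mp h'
      rw [← ih hk]
      show Function.update (W A lamA v u k') k' _ i = _
      rw [Function.update_of_ne (by omega)]
    · rw [h']

lemma W_mem [NeZero q] (hA01 : ∀ a b, A a b = 0 ∨ A a b = 1) (hlam : 0 < lamA)
    (hv : ∀ a, 0 < v a) (heig : A.mulVec v = lamA • v) (hnorm : ∑ a, v a = lamA)
    {u : ℝ} (hu : u ∈ Set.Ico (0:ℝ) 1) (k : ℕ) :
    lft A lamA v k (W A lamA v u k) ≤ u ∧
      u < lft A lamA v k (W A lamA v u k) + len A lamA v k (W A lamA v u k) := by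
  induction k with
  | zero =>
    constructor
    · exact hu.1
    · show u < 0 + len A lamA v 0 _
      rw [len_zero]; linarith [hu.2]
  | succ k ih =>
    set w := W A lamA v u k with hw
    have hex : ∃ b : Fin q, sAux A lamA v (lft A lamA v k w) k w b ≤ u ∧
        u < sAux A lamA v (lft A lamA v k w) k w (b + 1) := by
      obtain ⟨m, hm, h1, h2⟩ := exists_bracket
        (fun m m' hle => sAux_mono A lamA v hA01 hlam hv _ _ _ hle) q
        (le_trans (le_of_eq rfl) ih.1)
        (by rw [sAux_top A lamA v hA01 hlam hv heig hnorm]; exact ih.2)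
      exact ⟨⟨m, hm⟩, h1, h2⟩
    have hW : W A lamA v u (k + 1) = Function.update w k hex.choose := by
      show Function.update w k _ = _
      congr 1
      rw [dif_pos hex]
    set b := hex.choose with hb
    have hbp := hex.choose_spec
    have hcongr : ∀ i < k, Function.update w k b i = w i := fun i hi =>
      Function.update_of_ne (Nat.ne_of_lt hi) _ _
    have hlft : lft A lamA v (k + 1) (Function.update w k b)
        = sAux A lamA v (lft A lamA v k w) k w b := by
      rw [lft_succ, lft_congr A lamA v hcongr, sAux_congr A lamA v _ hcongr,
        Function.update_self]
    have hlen : lft A lamA v (k + 1) (Function.update w k b)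
          + len A lamA v (k + 1) (Function.update w k b)
        = sAux A lamA v (lft A lamA v k w) k w (b + 1) := by
      rw [hlft, sAux_succ_coe]
    rw [hW]
    constructor
    · rw [hlft]; exact hbp.1
    · rw [hlen]; exact hbp.2

lemma W_eq [NeZero q] (hA01 : ∀ a b, A a b = 0 ∨ A a b = 1) (hlam : 0 < lamA)
    (hv : ∀ a, 0 < v a) (heig : A.mulVec v = lamA • v) (hnorm : ∑ a, v a = lamA)
    {u : ℝ} (hu : u ∈ Set.Ico (0:ℝ) 1) :
    ∀ (k : ℕ) (w : ℕ → Fin q), lft A lamA v k w ≤ u →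
      u < lft A lamA v k w + len A lamA v k w → ∀ i < k, W A lamA v u k i = w i := by
  intro k
  induction k with
  | zero => intro w _ _ i hi; omega
  | succ k ih =>
    intro w h1 h2 i hi
    obtain ⟨hn1, hn2⟩ := nesting A lamA v hA01 hlam hv heig hnorm k w
    have hk1 : lft A lamA v k w ≤ u := le_trans hn1 h1
    have hk2 : u < lft A lamA v k w + len A lamA v k w := lt_of_lt_of_le h2 hn2
    have hpre : ∀ i < k, W A lamA v u k i = w i := ih w hk1 hk2
    set w' := W A lamA v u k with hw'
    -- the two sAux families agree
    have hlfteq : lft A lamA v k w' = lft A lamA v k w :=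
      lft_congr A lamA v hpre
    have hsaux : ∀ m, sAux A lamA v (lft A lamA v k w') k w' m
        = sAux A lamA v (lft A lamA v k w) k w m := by
      intro m; rw [hlfteq]; exact sAux_congr A lamA v _ hpre m
    -- existence of the bracket for u (from the bracket of w itself)
    have hex : ∃ b : Fin q, sAux A lamA v (lft A lamA v k w') k w' b ≤ u ∧
        u < sAux A lamA v (lft A lamA v k w') k w' (b + 1) := by
      refine ⟨w k, ?_, ?_⟩
      · rw [hsaux]
        have : sAux A lamA v (lft A lamA v k w) k w (w k) = lft A lamA v (k + 1) w :=
          (lft_succ A lamA v k w).symm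
        rw [this]; exact h1
      · rw [hsaux]
        have : sAux A lamA v (lft A lamA v k w) k w ((w k : ℕ) + 1)
            = lft A lamA v (k + 1) w + len A lamA v (k + 1) w := by
          rw [lft_succ, sAux_succ_coe]
          congr 1
          refine len_congr A lamA v fun i hi => ?_
          by_cases h : i = k
          · subst h; simp
          · rw [Function.update_of_ne h]
        rw [this]; exact h2
    have hWstep : W A lamA v u (k + 1) = Function.update w' k hex.choose := by
      show Function.update w' k _ = _
      congr 1
      rw [dif_pos hex]
    have hbp := hex.choose_spec
    set b := hex.choose with hb
    -- b = w k by disjointness of consecutive brackets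
    have hbk : b = w k := by
      by_contra hne
      rcases lt_or_gt_of_ne (fun h => hne (Fin.ext h) : (b:ℕ) ≠ (w k : ℕ)) with hlt | hgt
      · -- b < w k : sAux (b+1) ≤ sAux (w k) = lft (k+1) w ≤ u, contradicting u < sAux (b+1)
        have : sAux A lamA v (lft A lamA v k w') k w' (b + 1) ≤ u := by
          rw [hsaux]
          refine le_trans (sAux_mono A lamA v hA01 hlam hv _ _ _ hlt) ?_
          rw [← lft_succ]; exact h1
        linarith [hbp.2]
      · -- w k < b : sAux (w k + 1) ≤ sAux b ≤ u, but u < lft(k+1)w + len = sAux (w k + 1)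
        have h3 : sAux A lamA v (lft A lamA v k w) k w ((w k : ℕ) + 1)
            ≤ sAux A lamA v (lft A lamA v k w) k w b :=
          sAux_mono A lamA v hA01 hlam hv _ _ _ hgt
        have h4 : sAux A lamA v (lft A lamA v k w) k w ((w k : ℕ) + 1)
            = lft A lamA v (k + 1) w + len A lamA v (k + 1) w := by
          rw [lft_succ, sAux_succ_coe]
          congr 1
          refine len_congr A lamA v fun i hi => ?_
          by_cases h : i = k
          · subst h; simp
          · rw [Function.update_of_ne h]
        have h5 := hbp.1
        rw [hsaux] at h5
        linarith
    rcases Nat.lt_succ_iff_lt_or_eq.mp hi with hik | hik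
    · rw [hWstep, Function.update_of_ne (Nat.ne_of_lt hik)]
      exact hpre i hik
    · subst hik
      rw [hWstep, Function.update_self, hbk]

lemma G_iff [NeZero q] (hA01 : ∀ a b, A a b = 0 ∨ A a b = 1) (hlam : 0 < lamA)
    (hv : ∀ a, 0 < v a) (heig : A.mulVec v = lamA • v) (hnorm : ∑ a, v a = lamA)
    {u : ℝ} (hu : u ∈ Set.Ico (0:ℝ) 1) (k : ℕ) (w : ℕ → Fin q) :
    (∀ i < k, W A lamA v u (i + 1) i = w i) ↔
      (lft A lamA v k w ≤ u ∧ u < lft A lamA v k w + len A lamA v k w) := by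
  constructor
  · intro h
    have hagree : ∀ i < k, W A lamA v u k i = w i := fun i hi =>
      (W_stable A lamA v u (by omega) (Nat.lt_succ_self i)).trans (h i hi)
    obtain ⟨h1, h2⟩ := W_mem A lamA v hA01 hlam hv heig hnorm hu k
    rw [lft_congr A lamA v hagree] at h1 h2
    rw [len_congr A lamA v hagree] at h2
    exact ⟨h1, h2⟩
  · intro h i hi
    have h1 := W_eq A lamA v hA01 hlam hv heig hnorm hu k w h.1 h.2 i hi
    exact (W_stable A lamA v u (by omega) (Nat.lt_succ_self i)).symm.trans h1

lemma len_pos_adm (hA01 : ∀ a b, A a b = 0 ∨ A a b = 1) {k : ℕ} {w : ℕ → Fin q}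
    (h : 0 < len A lamA v k w) : ∀ j, j + 1 < k → A (w j) (w (j + 1)) = 1 := by
  intro j hj
  rcases hA01 (w j) (w (j + 1)) with h0 | h0
  · exfalso
    have : c A lamA v (j + 1) w = 0 := by
      unfold c
      rw [if_neg (Nat.succ_ne_zero j), Nat.succ_sub_one, h0, zero_mul, zero_div]
    have : len A lamA v k w = 0 :=
      Finset.prod_eq_zero (Finset.mem_range.mpr hj) this
    linarith
  · exact h0

lemma len_val (hlam : 0 < lamA) (hv : ∀ a, 0 < v a) :
    ∀ (k : ℕ), 1 ≤ k → ∀ (w : ℕ → Fin q), (∀ j, j + 1 < k → A (w j) (w (j + 1)) = 1) →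
      len A lamA v k w = (lamA ^ k)⁻¹ * v (w (k - 1)) := by
  intro k
  induction k with
  | zero => omega
  | succ k ih =>
    intro _ w hadm
    rcases Nat.eq_zero_or_pos k with hk | hk
    · subst hk
      show len A lamA v 1 w = _
      rw [len, Finset.prod_range_one]
      unfold c
      rw [if_pos rfl, pow_one]
      simp [div_eq_inv_mul]
    · have hadm' : ∀ j, j + 1 < k → A (w j) (w (j + 1)) = 1 := fun j hj =>
        hadm j (by omega)
      have hA : A (w (k - 1)) (w k) = 1 := by
        have := hadm (k - 1) (by omega)
        rwa [(by omega : k - 1 + 1 = k)] at this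
      rw [len_succ, ih hk w hadm']
      unfold c
      rw [if_neg (by omega : k ≠ 0), hA, one_mul]
      have h1 : v (w (k - 1)) ≠ 0 := (hv _).ne'
      have h2 : lamA ≠ 0 := hlam.ne'
      rw [Nat.succ_sub_one]
      field_simp
      ring

end lemmas

end CK15

/-- The self-similar Perron–Frobenius measure on the subshift `Λ_A` underlying
the unique KMS state of the Cuntz–Krieger algebra `𝒪_{𝔄,A}` at inverse
temperature equal to the Hausdorff dimension: if `A` is an irreducible
`{0,1}`-matrix with Perron–Frobenius eigenvalue `λ_A > 0` and positive right
eigenvector `v` normalized by `∑_a v_a = λ_A`, there is a Borel probability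
measure `μ` on `Λ_A` with `μ(Λ_A(w)) = λ_A^{-k} v_{w_k}` on admissible
cylinders of length `k ≥ 1`. -/
theorem stmt15 (q : ℕ) (hq : 2 ≤ q) (A : Matrix (Fin q) (Fin q) ℝ)
    (hA01 : ∀ a b, A a b = 0 ∨ A a b = 1)
    (hirr : ∀ a b, ∃ m > 0, 0 < (A ^ m) a b)
    (lamA : ℝ) (hlam : 0 < lamA)
    (v : Fin q → ℝ) (hv : ∀ a, 0 < v a)
    (heig : A.mulVec v = lamA • v)
    (hnorm : ∑ a, v a = lamA) :
    ∃ μ : MeasureTheory.Measure {x : ℕ → Fin q // ∀ k, A (x k) (x (k + 1)) = 1},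
      MeasureTheory.IsProbabilityMeasure μ ∧
      ∀ (k : ℕ), 1 ≤ k → ∀ w : ℕ → Fin q,
        (∀ j, j + 1 < k → A (w j) (w (j + 1)) = 1) →
        μ {x | ∀ i < k, x.1 i = w i} =
          ENNReal.ofReal ((lamA ^ k)⁻¹ * v (w (k - 1))) := by
  classical
  haveI : NeZero q := ⟨by omega⟩
  open MeasureTheory in
  -- a successor function giving a default point of the subshift
  have hsucc : ∀ a : Fin q, ∃ b, A a b = 1 := by
    intro a
    obtain ⟨m, hm, hpos⟩ := hirr a a
    by_contra h
    push_neg at h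
    have hz : ∀ b, A a b = 0 := fun b => (hA01 a b).resolve_right (h b)
    have hAm : (A ^ m) a a = ∑ b, A a b * (A ^ (m - 1)) b a := by
      conv_lhs => rw [(by omega : m = 1 + (m - 1)), pow_add, pow_one]
      rw [Matrix.mul_apply]
    rw [hAm] at hpos
    simp [hz] at hpos
  choose sc hsc using hsucc
  set z : ℕ → Fin q := fun n => sc^[n] 0 with hzdef
  have hz : ∀ n, A (z n) (z (n + 1)) = 1 := by
    intro n
    have hit : z (n + 1) = sc (z n) := Function.iterate_succ_apply' sc n 0
    rw [hit]
    exact hsc _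
  -- the coding map
  set Gf : ℝ → (ℕ → Fin q) := fun u =>
    if u ∈ Set.Ico (0:ℝ) 1 then (fun n => CK15.W A lamA v u (n + 1) n) else z with hGf
  have hG0 : ∀ u ∈ Set.Ico (0:ℝ) 1, ∀ n, Gf u n = CK15.W A lamA v u (n + 1) n :=
    fun u hu n => by simp only [hGf, if_pos hu]
  have hG1 : ∀ u, u ∉ Set.Ico (0:ℝ) 1 → ∀ n, Gf u n = z n :=
    fun u hu n => by simp only [hGf, if_neg hu]
  have hGmem : ∀ u n, A (Gf u n) (Gf u (n + 1)) = 1 := by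
    intro u n
    by_cases hu : u ∈ Set.Ico (0:ℝ) 1
    · rw [hG0 u hu n, hG0 u hu (n + 1)]
      obtain ⟨h1, h2⟩ := CK15.W_mem A lamA v hA01 hlam hv heig hnorm hu (n + 2)
      have hpos : 0 < CK15.len A lamA v (n + 2) (CK15.W A lamA v u (n + 2)) := by linarith
      have hadm := CK15.len_pos_adm A lamA v hA01 hpos n (by omega)
      have e1 : CK15.W A lamA v u (n + 2) n = CK15.W A lamA v u (n + 1) n :=
        CK15.W_stable A lamA v u (by omega) (by omega)
      rw [e1] at hadm
      exact hadm
    · rw [hG1 u hu n, hG1 u hu (n + 1)]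
      exact hz n
  -- the key cylinder identity
  have key : ∀ (k : ℕ) (w : ℕ → Fin q),
      {u : ℝ | u ∈ Set.Ico (0:ℝ) 1 ∧ ∀ i < k, Gf u i = w i}
        = Set.Ico (CK15.lft A lamA v k w)
            (CK15.lft A lamA v k w + CK15.len A lamA v k w) := by
    intro k w
    ext u
    simp only [Set.mem_setOf_eq, Set.mem_Ico]
    constructor
    · rintro ⟨hu, h⟩
      exact (CK15.G_iff A lamA v hA01 hlam hv heig hnorm hu k w).mp
        (fun i hi => by rw [← hG0 u hu i]; exact h i hi)
    · intro h
      have hsub := CK15.interval_sub A lamA v hA01 hlam hv heig hnorm k w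
      have hu : u ∈ Set.Ico (0:ℝ) 1 :=
        ⟨le_trans hsub.1 h.1, lt_of_lt_of_le h.2 hsub.2⟩
      refine ⟨hu, fun i hi => ?_⟩
      rw [hG0 u hu i]
      exact (CK15.G_iff A lamA v hA01 hlam hv heig hnorm hu k w).mpr h i hi
  -- measurability of the coding map
  have hmeas : ∀ n, Measurable fun u => Gf u n := by
    intro n
    apply measurable_to_countable'
    intro b
    have hset : (fun u => Gf u n) ⁻¹' {b} =
        (⋃ ω ∈ {ω : Fin (n + 1) → Fin q | ω ⟨n, Nat.lt_succ_self n⟩ = b},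
          Set.Ico (CK15.lft A lamA v (n + 1) (fun i => if h : i < n + 1 then ω ⟨i, h⟩ else 0))
            (CK15.lft A lamA v (n + 1) (fun i => if h : i < n + 1 then ω ⟨i, h⟩ else 0)
              + CK15.len A lamA v (n + 1) (fun i => if h : i < n + 1 then ω ⟨i, h⟩ else 0))) ∪
        (if z n = b then (Set.Ico (0:ℝ) 1)ᶜ else ∅) := by
      ext u
      simp only [Set.mem_preimage, Set.mem_singleton_iff, Set.mem_union, Set.mem_iUnion,
        Set.mem_setOf_eq, exists_prop]
      by_cases hu : u ∈ Set.Ico (0:ℝ) 1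
      · constructor
        · intro hb
          left
          refine ⟨fun i => Gf u i, ?_, ?_⟩
          · exact hb
          · rw [← key (n + 1) (fun i => if h : i < n + 1 then (fun j : Fin (n+1) => Gf u j) ⟨i, h⟩ else 0)]
            refine ⟨hu, fun i hi => ?_⟩
            simp only [dif_pos hi]
        · rintro (⟨ω, hω, hmem⟩ | hmem)
          · have := (key (n + 1) (fun i => if h : i < n + 1 then ω ⟨i, h⟩ else 0)).symm ▸ hmem
            rw [← key (n + 1) (fun i => if h : i < n + 1 then ω ⟨i, h⟩ else 0)] at hmem
            have h2 := hmem.2 n (Nat.lt_succ_self n)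
            rw [h2, dif_pos (Nat.lt_succ_self n)]
            exact hω
          · split at hmem
            · exact absurd hu hmem
            · exact absurd hmem (Set.notMem_empty u)
      · rw [hG1 u hu n]
        constructor
        · intro hb
          right
          rw [if_pos hb]
          exact hu
        · rintro (⟨ω, hω, hmem⟩ | hmem)
          · exfalso
            have hsub := CK15.interval_sub A lamA v hA01 hlam hv heig hnorm (n + 1)
              (fun i => if h : i < n + 1 then ω ⟨i, h⟩ else 0)
            rcases hmem with ⟨hm1, hm2⟩
            exact hu ⟨le_trans hsub.1 hm1, lt_of_lt_of_le hm2 hsub.2⟩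
          · split at hmem
            · assumption
            · exact absurd hmem (Set.notMem_empty u)
    rw [hset]
    refine MeasurableSet.union ?_ ?_
    · exact MeasurableSet.biUnion (Set.to_countable _) (fun ω _ => measurableSet_Ico)
    · split
      · exact measurableSet_Ico.compl
      · exact MeasurableSet.empty
  set G' : ℝ → {x : ℕ → Fin q // ∀ k, A (x k) (x (k + 1)) = 1} :=
    fun u => ⟨Gf u, hGmem u⟩ with hG'def
  have hG' : Measurable G' := Measurable.subtype_mk (measurable_pi_iff.mpr hmeas)
  refine ⟨(volume.restrict (Set.Ico (0:ℝ) 1)).map G', ?_, ?_⟩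
  · haveI : IsProbabilityMeasure (volume.restrict (Set.Ico (0:ℝ) 1)) := by
      constructor
      rw [Measure.restrict_apply_univ, Real.volume_Ico]
      norm_num
    exact Measure.isProbabilityMeasure_map hG'.aemeasurable
  · intro k hk w hadm
    have hCmeas : MeasurableSet
        {x : {x : ℕ → Fin q // ∀ k, A (x k) (x (k + 1)) = 1} | ∀ i < k, x.1 i = w i} := by
      have : {x : {x : ℕ → Fin q // ∀ k, A (x k) (x (k + 1)) = 1} | ∀ i < k, x.1 i = w i}
          = ⋂ i ∈ Finset.range k, (fun x : {x : ℕ → Fin q // ∀ k, A (x k) (x (k + 1)) = 1}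
              => x.1 i) ⁻¹' {w i} := by
        ext x
        simp [Set.mem_iInter]
      rw [this]
      exact MeasurableSet.biInter (Set.to_countable _)
        (fun i _ => ((measurable_pi_apply i).comp measurable_subtype_coe)
          (measurableSet_singleton (w i)))
    rw [Measure.map_apply hG' hCmeas, Measure.restrict_apply (hG' hCmeas)]
    have hpre : G' ⁻¹' {x : {x : ℕ → Fin q // ∀ k, A (x k) (x (k + 1)) = 1} | ∀ i < k, x.1 i = w i}
        ∩ Set.Ico (0:ℝ) 1
        = Set.Ico (CK15.lft A lamA v k w)
            (CK15.lft A lamA v k w + CK15.len A lamA v k w) := by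
      rw [← key k w]
      ext u
      simp only [Set.mem_inter_iff, Set.mem_preimage, Set.mem_setOf_eq, hG'def]
      tauto
    rw [hpre, Real.volume_Ico, add_sub_cancel_left,
      CK15.len_val A lamA v hlam hv k hk w hadm]
end
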